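/- arXiv:2604.01041 — 3 statements merged into one kernel-verified Lean document; each statement's English description precedes it below -/
import Mathlib

section
/- The cellular automaton A_φ : Config_{n,m} → Config_{n,m} is injective if and only if the CNF formula φ is not satisfiable. -/
/-!
Cellular automata on bounded configurations (Durand / Kapytka setup).

A cell state has components (coord, flag, a, pd, pc, label), each possibly the
undefined value `□` (modelled by `Option`).  Configurations are maps
`ℤ × ℤ → CellState` that are quiescent exactly outside the rectangle
`[n+1] × [m+2]`.  A CNF formula `φ` is given by its clause–literal incidence:
`φ i j = some true` iff `x_j ∈ C_i`, `some false` iff `¬x_j ∈ C_i`,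
`none` iff neither occurs.
-/

namespace CA

structure CellState where
  coord : Option ℤ × Option ℤ
  flag  : Option ℤ
  aval  : Option Bool
  pd    : Option Bool
  pc    : Option Bool
  label : Option Bool
  deriving DecidableEq

/-- The quiescent state `q`: all components are `□`. -/
def qState : CellState := ⟨(none, none), none, none, none, none, none⟩

abbrev Cfg := ℤ × ℤ → CellState

/-- Clause–literal incidence of a CNF formula. -/
abbrev CNF := ℤ → ℤ → Option Bool

/-- The position `p` lies inside the rectangle `[n+1] × [m+2]`. -/
def inside (n m : ℕ) (p : ℤ × ℤ) : Prop :=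
  0 ≤ p.1 ∧ p.1 ≤ (n : ℤ) ∧ 0 ≤ p.2 ∧ p.2 ≤ (m : ℤ) + 1

def rightN (p : ℤ × ℤ) : ℤ × ℤ := (p.1, p.2 + 1)
def leftN  (p : ℤ × ℤ) : ℤ × ℤ := (p.1, p.2 - 1)
def belowN (p : ℤ × ℤ) : ℤ × ℤ := (p.1 + 1, p.2)
def aboveN (p : ℤ × ℤ) : ℤ × ℤ := (p.1 - 1, p.2)

/-- `q` is a von Neumann neighbour of `p`. -/
def vnNbr (p q : ℤ × ℤ) : Prop :=
  q = rightN p ∨ q = leftN p ∨ q = belowN p ∨ q = aboveN p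

/-- The state set `S_{n,m}`: the seven classes (S1)–(S7). -/
def ValidState (n m : ℕ) (s : CellState) : Prop :=
  (∃ l : Bool, s = ⟨(some 0, some 0), none, none, none, none, some l⟩) ∨
  (∃ (i : ℤ) (l : Bool), 1 ≤ i ∧ i ≤ (n : ℤ) ∧
      s = ⟨(some i, some 0), none, none, none, none, some l⟩) ∨
  (∃ (j : ℤ) (a l : Bool), 1 ≤ j ∧ j ≤ (m : ℤ) ∧
      s = ⟨(some 0, some j), none, some a, none, none, some l⟩) ∨
  (∃ l : Bool, s = ⟨(some 0, some ((m : ℤ) + 1)), none, none, none, none, some l⟩) ∨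
  (∃ (i : ℤ) (pc l : Bool), 1 ≤ i ∧ i ≤ (n : ℤ) ∧
      s = ⟨(some i, some ((m : ℤ) + 1)), none, none, none, some pc, some l⟩) ∨
  (∃ (i j fl : ℤ) (a pd l : Bool), 1 ≤ i ∧ i ≤ (n : ℤ) ∧ 1 ≤ j ∧ j ≤ (m : ℤ) ∧
      (fl = -1 ∨ fl = 0 ∨ fl = 1) ∧
      s = ⟨(some i, some j), some fl, some a, some pd, none, some l⟩) ∨
  s = qState

/-- `C ∈ Config_{n,m}`. -/
def IsConfig (n m : ℕ) (C : Cfg) : Prop :=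
  (∀ p, ValidState n m (C p)) ∧
  (∀ p, inside n m p → C p ≠ qState) ∧
  (∀ p, ¬ inside n m p → C p = qState)

/-- The literal of clause `C_i` on variable `x_j` is satisfied by `a`. -/
def litSat (φ : CNF) (a : ℤ → Bool) (i j : ℤ) : Prop :=
  (φ i j = some true ∧ a j = true) ∨ (φ i j = some false ∧ a j = false)

/-- Clause `C_i` is satisfied by the assignment `a`. -/
def clauseSat (φ : CNF) (a : ℤ → Bool) (m : ℕ) (i : ℤ) : Prop :=
  ∃ j : ℤ, 1 ≤ j ∧ j ≤ (m : ℤ) ∧ litSat φ a i j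

/-- The CNF formula `φ` (with `n` clauses, `m` variables) is satisfiable. -/
def Satisfiable (φ : CNF) (n m : ℕ) : Prop :=
  ∃ a : ℤ → Bool, ∀ i : ℤ, 1 ≤ i → i ≤ (n : ℤ) → clauseSat φ a m i

/-- The cell at position `q` behaves correctly for theoretical index `idx`:
if `idx` is inside the rectangle its written coordinates are `idx`,
otherwise the cell is quiescent. -/
def nbrCoordOK (n m : ℕ) (C : Cfg) (q idx : ℤ × ℤ) : Prop :=
  (inside n m idx → (C q).coord = (some idx.1, some idx.2)) ∧
  (¬ inside n m idx → C q = qState)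

/-- (A) Index consistency. -/
def ruleA (n m : ℕ) (C : Cfg) (p : ℤ × ℤ) : Prop :=
  ∀ i j : ℤ, 0 ≤ i → i ≤ (n : ℤ) → 0 ≤ j → j ≤ (m : ℤ) + 1 →
    ((C p).coord = (some i, some j) ↔
      (nbrCoordOK n m C (rightN p) (i, j + 1) ∧
       nbrCoordOK n m C (leftN p) (i, j - 1) ∧
       nbrCoordOK n m C (belowN p) (i + 1, j) ∧
       nbrCoordOK n m C (aboveN p) (i - 1, j)))

/-- (B) Formula consistency. -/
def ruleB (φ : CNF) (n m : ℕ) (C : Cfg) (p : ℤ × ℤ) : Prop :=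
  ∀ i j : ℤ, (C p).coord = (some i, some j) →
    1 ≤ i → i ≤ (n : ℤ) → 1 ≤ j → j ≤ (m : ℤ) →
      (((C p).flag = some 1 ↔ φ i j = some true) ∧
       ((C p).flag = some (-1) ↔ φ i j = some false) ∧
       ((C p).flag = some 0 ↔ φ i j = none))

/-- (C1) the `a`-value is constant along columns `1 ≤ j ≤ m`. -/
def ruleC1 (n m : ℕ) (C : Cfg) (p : ℤ × ℤ) : Prop :=
  ∀ i j : ℤ, (C p).coord = (some i, some j) → 1 ≤ j → j ≤ (m : ℤ) →
    ((inside n m (aboveN p) → (C (aboveN p)).aval = (C p).aval) ∧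
     (inside n m (belowN p) → (C (belowN p)).aval = (C p).aval))

/-- (C2) partial conjunction recurrence for rows `r ≥ 2`. -/
def ruleC2 (n m : ℕ) (C : Cfg) (p : ℤ × ℤ) : Prop :=
  ∀ r : ℤ, (C p).coord = (some r, some ((m : ℤ) + 1)) → 2 ≤ r →
    ((C p).pc = some true ↔
      ((C (aboveN p)).pc = some true ∧ (C (leftN p)).pd = some true))

/-- (C3) partial conjunction base case. -/
def ruleC3 (n m : ℕ) (C : Cfg) (p : ℤ × ℤ) : Prop :=
  (C p).coord = (some 1, some ((m : ℤ) + 1)) →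
    ((C p).pc = some true ↔ (C (leftN p)).pd = some true)

/-- The literal written in the cell is satisfied:
`flag(s) = 1 ∧ a(s) = 1` or `flag(s) = −1 ∧ a(s) = 0`. -/
def litHolds (C : Cfg) (p : ℤ × ℤ) : Prop :=
  ((C p).flag = some 1 ∧ (C p).aval = some true) ∨
  ((C p).flag = some (-1) ∧ (C p).aval = some false)

/-- (D1) partial disjunction recurrence for columns `2 ≤ j ≤ m`. -/
def ruleD1 (n m : ℕ) (C : Cfg) (p : ℤ × ℤ) : Prop :=
  ∀ i j : ℤ, (C p).coord = (some i, some j) →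
    1 ≤ i → i ≤ (n : ℤ) → 2 ≤ j → j ≤ (m : ℤ) →
      ((C p).pd = some true ↔ ((C (leftN p)).pd = some true ∨ litHolds C p))

/-- (D2) partial disjunction base case. -/
def ruleD2 (n m : ℕ) (C : Cfg) (p : ℤ × ℤ) : Prop :=
  ∀ i : ℤ, (C p).coord = (some i, some 1) → 1 ≤ i → i ≤ (n : ℤ) →
    ((C p).pd = some true ↔ litHolds C p)

/-- (E) Technical conditions (E1)–(E4). -/
def ruleE (n m : ℕ) (C : Cfg) (p : ℤ × ℤ) : Prop :=
  ∀ i j : ℤ, (C p).coord = (some i, some j) →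
    (((j = 0 ∨ (i = 0 ∧ j = 0) ∨ (i = 0 ∧ j = (m : ℤ) + 1)) →
        (C p).flag = none ∧ (C p).aval = none ∧ (C p).pd = none ∧ (C p).pc = none) ∧
     ((i = 0 ∧ 1 ≤ j ∧ j ≤ (m : ℤ)) →
        (C p).flag = none ∧ (C p).pd = none ∧ (C p).pc = none) ∧
     ((j = (m : ℤ) + 1 ∧ 1 ≤ i) →
        (C p).flag = none ∧ (C p).aval = none ∧ (C p).pd = none) ∧
     ((1 ≤ i ∧ i ≤ (n : ℤ) ∧ 1 ≤ j ∧ j ≤ (m : ℤ)) → (C p).pc = none))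

/-- The cell of `C` at `p` is locally correct: rules (A)–(E). -/
def LocallyCorrect (φ : CNF) (n m : ℕ) (C : Cfg) (p : ℤ × ℤ) : Prop :=
  ruleA n m C p ∧ ruleB φ n m C p ∧ ruleC1 n m C p ∧ ruleC2 n m C p ∧
  ruleC3 n m C p ∧ ruleD1 n m C p ∧ ruleD2 n m C p ∧ ruleE n m C p

/-- The (non-quiescent) cell of `C` at `p` is blue: it is locally correct and,
if it is an output cell, its `pc` component is `1`.  A cell is red iff it is
not blue. -/
def Blue (φ : CNF) (n m : ℕ) (C : Cfg) (p : ℤ × ℤ) : Prop :=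
  C p ≠ qState ∧ LocallyCorrect φ n m C p ∧
  ((C p).coord = (some (n : ℤ), some ((m : ℤ) + 1)) → (C p).pc = some true)

open scoped Classical in
/-- The snake-like successor map on indices of the rectangle `[n+1] × [m+2]`. -/
noncomputable def suc (n m : ℕ) (p : ℤ × ℤ) : ℤ × ℤ :=
  if p = (0, 0) ∨ (Even p.1 ∧ 1 ≤ p.2 ∧ p.2 ≤ (m : ℤ)) then (p.1, p.2 + 1)
  else if p = ((n : ℤ), 1) ∨ (Odd p.1 ∧ 2 ≤ p.2 ∧ p.2 ≤ (m : ℤ) + 1) then (p.1, p.2 - 1)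
  else if (Odd p.1 ∧ p.2 = 1 ∧ p.1 ≠ (n : ℤ)) ∨ (Even p.1 ∧ p.2 = (m : ℤ) + 1) then
    (p.1 + 1, p.2)
  else (p.1 - 1, p.2)

/-- `q` is the successor cell of `p` in `C`: a von Neumann neighbour whose
written coordinates are `suc` of the written coordinates of `p`. -/
def IsSucc (n m : ℕ) (C : Cfg) (p q : ℤ × ℤ) : Prop :=
  vnNbr p q ∧ ∃ i j : ℤ, (C p).coord = (some i, some j) ∧
    (C q).coord = (some (suc n m (i, j)).1, some (suc n m (i, j)).2)

/-- The position of the successor cell of `p` (the geometric neighbour of `p`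
in the direction from the written coordinates of `p` to their `suc`). -/
noncomputable def succPos (n m : ℕ) (C : Cfg) (p : ℤ × ℤ) : ℤ × ℤ :=
  match (C p).coord with
  | (some i, some j) => (p.1 + ((suc n m (i, j)).1 - i), p.2 + ((suc n m (i, j)).2 - j))
  | _ => p

open scoped Classical in
/-- The global map of the cellular automaton `A_φ`: a blue cell replaces its
label by `label(s₁) XOR label(s_k)` where `s_k` is the state of its successor
cell; a red cell is unchanged. -/
noncomputable def step (φ : CNF) (n m : ℕ) (C : Cfg) : Cfg := fun p =>
  if Blue φ n m C p then
    { C p with label := Option.map₂ Bool.xor ((C p).label) ((C (succPos n m C p)).label) }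
  else C p

/-- `C ∼ C'`: the configurations agree on all state components except
possibly the labels. -/
def Similar (C C' : Cfg) : Prop :=
  ∀ p, (C p).coord = (C' p).coord ∧ (C p).flag = (C' p).flag ∧
    (C p).aval = (C' p).aval ∧ (C p).pd = (C' p).pd ∧ (C p).pc = (C' p).pc

/-- Encoding of clause–literal occurrence as flag value in `{−1, 0, 1}`. -/
def flagInt (o : Option Bool) : ℤ :=
  match o with
  | some true => 1
  | some false => -1
  | none => 0

/-- Truth value under `a` of the disjunction of the literals of `C_i`
among the variables `x₁, …, x_j`. -/
noncomputable def pdVal (φ : CNF) (a : ℤ → Bool) (i j : ℤ) : Bool :=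
  @decide (∃ u : ℤ, 1 ≤ u ∧ u ≤ j ∧ litSat φ a i u) (Classical.propDecidable _)

/-- Truth value under `a` of the partial conjunction `C₁ ∧ … ∧ C_i`. -/
noncomputable def pcVal (φ : CNF) (a : ℤ → Bool) (m : ℕ) (i : ℤ) : Bool :=
  @decide (∀ v : ℤ, 1 ≤ v → v ≤ i → clauseSat φ a m v) (Classical.propDecidable _)

open scoped Classical in
/-- The computation table `Table_φ(a)`, with all labels `0`. -/
noncomputable def Table (φ : CNF) (n m : ℕ) (a : ℤ → Bool) : Cfg := fun p =>
  if inside n m p then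
    { coord := (some p.1, some p.2)
      flag := if 1 ≤ p.1 ∧ p.1 ≤ (n : ℤ) ∧ 1 ≤ p.2 ∧ p.2 ≤ (m : ℤ) then
          some (flagInt (φ p.1 p.2)) else none
      aval := if 1 ≤ p.2 ∧ p.2 ≤ (m : ℤ) then some (a p.2) else none
      pd := if 1 ≤ p.1 ∧ p.1 ≤ (n : ℤ) ∧ 1 ≤ p.2 ∧ p.2 ≤ (m : ℤ) then
          some (pdVal φ a p.1 p.2) else none
      pc := if 1 ≤ p.1 ∧ p.1 ≤ (n : ℤ) ∧ p.2 = (m : ℤ) + 1 then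
          some (pcVal φ a m p.1) else none
      label := some false }
  else qState

end CA
namespace CA
variable {n m : ℕ}

lemma suc_right {i j : ℤ} (hno : (n:ℤ) % 2 = 1) (hm1 : 1 ≤ (m:ℤ))
    (h : (i = 0 ∧ j = 0) ∨ ((i % 2 = 0) ∧ 1 ≤ j ∧ j ≤ (m:ℤ))) :
    suc n m (i, j) = (i, j + 1) := by
  unfold suc
  split_ifs <;>
    first
      | rfl
      | (exfalso; simp only [Prod.mk.injEq, Int.even_iff, Int.odd_iff, ne_eq] at *; omega)

lemma suc_left {i j : ℤ} (hno : (n:ℤ) % 2 = 1) (hm1 : 1 ≤ (m:ℤ))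
    (h : (i = (n:ℤ) ∧ j = 1) ∨ ((i % 2 = 1) ∧ 2 ≤ j ∧ j ≤ (m:ℤ) + 1)) :
    suc n m (i, j) = (i, j - 1) := by
  unfold suc
  split_ifs <;>
    first
      | rfl
      | (exfalso; simp only [Prod.mk.injEq, Int.even_iff, Int.odd_iff, ne_eq] at *; omega)

lemma suc_down {i j : ℤ} (hno : (n:ℤ) % 2 = 1) (hm1 : 1 ≤ (m:ℤ))
    (h : ((i % 2 = 1) ∧ j = 1 ∧ i ≠ (n:ℤ)) ∨ ((i % 2 = 0) ∧ j = (m:ℤ) + 1)) :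
    suc n m (i, j) = (i + 1, j) := by
  unfold suc
  split_ifs <;>
    first
      | rfl
      | (exfalso; simp only [Prod.mk.injEq, Int.even_iff, Int.odd_iff, ne_eq] at *; omega)

lemma suc_up {i : ℤ} (hno : (n:ℤ) % 2 = 1) (hm1 : 1 ≤ (m:ℤ)) (hi : 1 ≤ i) :
    suc n m (i, 0) = (i - 1, 0) := by
  unfold suc
  split_ifs <;>
    first
      | rfl
      | (exfalso; simp only [Prod.mk.injEq, Int.even_iff, Int.odd_iff, ne_eq] at *; omega)

end CA
namespace CA
variable {n m : ℕ}

/-- Reachability along the snake successor map. -/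
def Reach (n m : ℕ) : ℤ × ℤ → ℤ × ℤ → Prop :=
  Relation.ReflTransGen (fun a b => b = suc n m a)

lemma Reach.refl {p : ℤ × ℤ} : Reach n m p p := Relation.ReflTransGen.refl

lemma Reach.trans {p q r : ℤ × ℤ} (h : Reach n m p q) (h' : Reach n m q r) :
    Reach n m p r := Relation.ReflTransGen.trans h h'

lemma reach_single {p q : ℤ × ℤ} (h : q = suc n m p) : Reach n m p q :=
  Relation.ReflTransGen.single h

lemma reach_right_aux (hno : (n:ℤ) % 2 = 1) (hm1 : 1 ≤ (m:ℤ)) {i j : ℤ}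
    (he : i % 2 = 0) (h1 : 1 ≤ j) :
    ∀ k : ℕ, j + k ≤ (m:ℤ) + 1 → Reach n m (i, j) (i, j + k)
  | 0, _ => by simpa using Reach.refl
  | k+1, h => by
    have ih := reach_right_aux hno hm1 he h1 k (by push_cast at h ⊢; omega)
    refine ih.tail ?_
    show (i, j + ((k+1:ℕ):ℤ)) = suc n m (i, j + (k:ℤ))
    rw [suc_right hno hm1 (Or.inr ⟨he, by omega, by push_cast at h ⊢; omega⟩)]
    simp only [Prod.mk.injEq]
    constructor <;> first | trivial | (push_cast; ring)

lemma reach_right (hno : (n:ℤ) % 2 = 1) (hm1 : 1 ≤ (m:ℤ)) {i j j' : ℤ}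
    (he : i % 2 = 0) (h1 : 1 ≤ j) (h2 : j ≤ j') (h3 : j' ≤ (m:ℤ) + 1) :
    Reach n m (i, j) (i, j') := by
  obtain ⟨k, hk⟩ : ∃ k : ℕ, j' = j + k := ⟨(j'-j).toNat, by omega⟩
  subst hk
  exact reach_right_aux hno hm1 he h1 k h3

lemma reach_left_aux (hno : (n:ℤ) % 2 = 1) (hm1 : 1 ≤ (m:ℤ)) {i j : ℤ}
    (ho : i % 2 = 1) (h1 : 1 ≤ j) :
    ∀ k : ℕ, j + k ≤ (m:ℤ) + 1 → Reach n m (i, j + k) (i, j)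
  | 0, _ => by simpa using Reach.refl
  | k+1, h => by
    have ih := reach_left_aux hno hm1 ho h1 k (by push_cast at h ⊢; omega)
    refine Relation.ReflTransGen.head ?_ ih
    show (i, j + (k:ℤ)) = suc n m (i, j + ((k+1:ℕ):ℤ))
    rw [suc_left hno hm1 (Or.inr ⟨ho, by push_cast; omega, by push_cast at h ⊢; omega⟩)]
    simp only [Prod.mk.injEq]
    constructor <;> first | trivial | (push_cast; ring)

lemma reach_left (hno : (n:ℤ) % 2 = 1) (hm1 : 1 ≤ (m:ℤ)) {i j j' : ℤ}
    (ho : i % 2 = 1) (h1 : 1 ≤ j') (h2 : j' ≤ j) (h3 : j ≤ (m:ℤ) + 1) :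
    Reach n m (i, j) (i, j') := by
  obtain ⟨k, hk⟩ : ∃ k : ℕ, j = j' + k := ⟨(j-j').toNat, by omega⟩
  subst hk
  exact reach_left_aux hno hm1 ho h1 k h3

lemma reach_up_aux (hno : (n:ℤ) % 2 = 1) (hm1 : 1 ≤ (m:ℤ)) {i : ℤ} (h0 : 0 ≤ i) :
    ∀ k : ℕ, Reach n m (i + k, 0) (i, 0)
  | 0 => by simpa using Reach.refl
  | k+1 => by
    have ih := reach_up_aux hno hm1 h0 k
    refine Relation.ReflTransGen.head ?_ ih
    show (i + (k:ℤ), 0) = suc n m (i + ((k+1:ℕ):ℤ), 0)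
    rw [suc_up hno hm1 (by push_cast; omega)]
    simp only [Prod.mk.injEq]
    constructor <;> first | trivial | (push_cast; ring)

lemma reach_up (hno : (n:ℤ) % 2 = 1) (hm1 : 1 ≤ (m:ℤ)) {i i' : ℤ}
    (h0 : 0 ≤ i') (h1 : i' ≤ i) : Reach n m (i, 0) (i', 0) := by
  obtain ⟨k, hk⟩ : ∃ k : ℕ, i = i' + k := ⟨(i-i').toNat, by omega⟩
  subst hk
  exact reach_up_aux hno hm1 h0 k

/-- Descend from `(i, m+1)` (even `i`) to the output corner `(n, m+1)`. -/
lemma reach_desc_aux (hno : (n:ℤ) % 2 = 1) (hm1 : 1 ≤ (m:ℤ)) :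
    ∀ k : ℕ, ∀ i : ℤ, i % 2 = 0 → 0 ≤ i → i + 2 * k + 1 = (n:ℤ) →
      Reach n m (i, (m:ℤ) + 1) ((n:ℤ), (m:ℤ) + 1)
  | 0, i, he, h0, hn => by
    push_cast at hn
    refine reach_single ?_
    rw [suc_down hno hm1 (Or.inr ⟨he, rfl⟩)]
    simp only [Prod.mk.injEq, and_true]
    omega
  | k+1, i, he, h0, hn => by
    push_cast at hn
    have s1 : Reach n m (i, (m:ℤ)+1) (i+1, (m:ℤ)+1) :=
      reach_single (by rw [suc_down hno hm1 (Or.inr ⟨he, rfl⟩)])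
    have s2 : Reach n m (i+1, (m:ℤ)+1) (i+1, 1) :=
      reach_left hno hm1 (by omega) (by omega) (by omega) (by omega)
    have s3 : Reach n m (i+1, 1) (i+2, 1) := by
      refine reach_single ?_
      rw [suc_down hno hm1 (Or.inl ⟨by omega, rfl, by omega⟩)]
      simp only [Prod.mk.injEq, and_true]
      omega
    have s4 : Reach n m (i+2, 1) (i+2, (m:ℤ)+1) :=
      reach_right hno hm1 (by omega) (by omega) (by omega) (by omega)
    have s5 : Reach n m (i+2, (m:ℤ)+1) ((n:ℤ), (m:ℤ)+1) :=
      reach_desc_aux hno hm1 k (i+2) (by omega) (by omega) (by push_cast; omega)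
    exact ((s1.trans s2).trans (s3.trans s4)).trans s5

lemma reach_desc (hno : (n:ℤ) % 2 = 1) (hm1 : 1 ≤ (m:ℤ)) {i : ℤ}
    (he : i % 2 = 0) (h0 : 0 ≤ i) (h1 : i ≤ (n:ℤ)) :
    Reach n m (i, (m:ℤ) + 1) ((n:ℤ), (m:ℤ) + 1) := by
  obtain ⟨k, hk⟩ : ∃ k : ℕ, i + 2 * k + 1 = (n:ℤ) := ⟨((n - i - 1)/2).toNat, by omega⟩
  exact reach_desc_aux hno hm1 k i he h0 hk

lemma reach_00 (hno : (n:ℤ) % 2 = 1) (hm1 : 1 ≤ (m:ℤ)) :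
    Reach n m (0, 0) ((n:ℤ), (m:ℤ) + 1) := by
  have s1 : Reach n m (0, 0) (0, 1) := by
    refine reach_single ?_
    rw [suc_right hno hm1 (Or.inl ⟨rfl, rfl⟩)]
    norm_num
  have s2 : Reach n m (0, 1) (0, (m:ℤ)+1) :=
    reach_right hno hm1 (by omega) (by omega) (by omega) (by omega)
  exact (s1.trans s2).trans (reach_desc hno hm1 (by omega) (by omega) (by omega))

/-- Every cell of the rectangle reaches the output corner. -/
lemma reach_to_out (hno : (n:ℤ) % 2 = 1) (hm1 : 1 ≤ (m:ℤ)) {i j : ℤ}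
    (h0 : 0 ≤ i) (h1 : i ≤ (n:ℤ)) (h2 : 0 ≤ j) (h3 : j ≤ (m:ℤ) + 1) :
    Reach n m (i, j) ((n:ℤ), (m:ℤ) + 1) := by
  rcases eq_or_lt_of_le h2 with hj0 | hj1
  · have : Reach n m (i, j) (0, 0) := by
      rw [← hj0]; exact reach_up hno hm1 le_rfl h0
    exact this.trans (reach_00 hno hm1)
  · rcases Int.emod_two_eq i with he | ho
    · have r1 : Reach n m (i, j) (i, (m:ℤ)+1) :=
        reach_right hno hm1 he (by omega) h3 le_rfl
      exact r1.trans (reach_desc hno hm1 he h0 h1)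
    · rcases eq_or_lt_of_le h1 with hin | hlt
      · have s1 : Reach n m (i, j) (i, 1) := reach_left hno hm1 ho (by omega) (by omega) h3
        have s2 : Reach n m (i, 1) (i, 0) := by
          refine reach_single ?_
          rw [suc_left hno hm1 (Or.inl ⟨hin, rfl⟩)]
          norm_num
        have s3 : Reach n m (i, 0) (0, 0) := reach_up hno hm1 le_rfl h0
        exact ((s1.trans s2).trans s3).trans (reach_00 hno hm1)
      · have s1 : Reach n m (i, j) (i, 1) := reach_left hno hm1 ho (by omega) (by omega) h3
        have s2 : Reach n m (i, 1) (i+1, 1) := by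
          refine reach_single ?_
          rw [suc_down hno hm1 (Or.inl ⟨ho, rfl, by omega⟩)]
        have s3 : Reach n m (i+1, 1) (i+1, (m:ℤ)+1) :=
          reach_right hno hm1 (by omega) (by omega) (by omega) (by omega)
        exact ((s1.trans s2).trans s3).trans (reach_desc hno hm1 (by omega) (by omega) (by omega))

/-- From `(0,0)` the entry points `(2k, 1)` of even rows are reachable. -/
lemma reach_entry_aux (hno : (n:ℤ) % 2 = 1) (hm1 : 1 ≤ (m:ℤ)) :
    ∀ k : ℕ, ∀ i : ℤ, i = 2 * k → i ≤ (n:ℤ) → Reach n m (0, 0) (i, 1)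
  | 0, i, hi, _ => by
    push_cast at hi
    subst hi
    refine reach_single ?_
    rw [suc_right hno hm1 (Or.inl ⟨rfl, rfl⟩)]
    norm_num
  | k+1, i, hi, hle => by
    push_cast at hi
    have ih : Reach n m (0, 0) (2*(k:ℤ), 1) :=
      reach_entry_aux hno hm1 k (2*k) (by push_cast; ring) (by omega)
    have s1 : Reach n m (2*(k:ℤ), 1) (2*(k:ℤ), (m:ℤ)+1) :=
      reach_right hno hm1 (by omega) (by omega) (by omega) (by omega)
    have s2 : Reach n m (2*(k:ℤ), (m:ℤ)+1) (2*(k:ℤ)+1, (m:ℤ)+1) :=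
      reach_single (by rw [suc_down hno hm1 (Or.inr ⟨by omega, rfl⟩)])
    have s3 : Reach n m (2*(k:ℤ)+1, (m:ℤ)+1) (2*(k:ℤ)+1, 1) :=
      reach_left hno hm1 (by omega) (by omega) (by omega) (by omega)
    have s4 : Reach n m (2*(k:ℤ)+1, 1) (i, 1) := by
      refine reach_single ?_
      rw [suc_down hno hm1 (Or.inl ⟨by omega, rfl, by omega⟩)]
      simp only [Prod.mk.injEq, and_true]
      omega
    exact ((ih.trans s1).trans (s2.trans s3)).trans s4

lemma reach_row (hno : (n:ℤ) % 2 = 1) (hm1 : 1 ≤ (m:ℤ)) {i j : ℤ}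
    (h0 : 0 ≤ i) (h1 : i ≤ (n:ℤ)) (h2 : 1 ≤ j) (h3 : j ≤ (m:ℤ) + 1) :
    Reach n m (0, 0) (i, j) := by
  rcases Int.emod_two_eq i with he | ho
  · obtain ⟨k, hk⟩ : ∃ k : ℕ, i = 2 * k := ⟨(i/2).toNat, by omega⟩
    have r1 : Reach n m (0, 0) (i, 1) := reach_entry_aux hno hm1 k i hk h1
    exact r1.trans (reach_right hno hm1 he (by omega) h2 h3)
  · obtain ⟨k, hk⟩ : ∃ k : ℕ, i - 1 = 2 * k := ⟨((i-1)/2).toNat, by omega⟩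
    have e1 : Reach n m (0, 0) (i-1, 1) := reach_entry_aux hno hm1 k (i-1) hk (by omega)
    have e2 : Reach n m (i-1, 1) (i-1, (m:ℤ)+1) :=
      reach_right hno hm1 (by omega) (by omega) (by omega) (by omega)
    have e3 : Reach n m (i-1, (m:ℤ)+1) (i, (m:ℤ)+1) := by
      refine reach_single ?_
      rw [suc_down hno hm1 (Or.inr ⟨by omega, rfl⟩)]
      simp only [Prod.mk.injEq, and_true]
      omega
    have e4 : Reach n m (i, (m:ℤ)+1) (i, j) := reach_left hno hm1 ho h2 h3 le_rfl
    exact ((e1.trans e2).trans e3).trans e4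

/-- Every cell of the rectangle is reachable from the output corner. -/
lemma reach_from_out (hno : (n:ℤ) % 2 = 1) (hm1 : 1 ≤ (m:ℤ)) {i j : ℤ}
    (h0 : 0 ≤ i) (h1 : i ≤ (n:ℤ)) (h2 : 0 ≤ j) (h3 : j ≤ (m:ℤ) + 1) :
    Reach n m ((n:ℤ), (m:ℤ) + 1) (i, j) := by
  have s1 : Reach n m ((n:ℤ), (m:ℤ)+1) ((n:ℤ), 1) :=
    reach_left hno hm1 hno (by omega) (by omega) le_rfl
  have s2 : Reach n m ((n:ℤ), 1) ((n:ℤ), 0) := by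
    refine reach_single ?_
    rw [suc_left hno hm1 (Or.inl ⟨rfl, rfl⟩)]
    norm_num
  rcases eq_or_lt_of_le h2 with hj0 | hj1
  · have s3 : Reach n m ((n:ℤ), 0) (i, 0) := reach_up hno hm1 h0 h1
    rw [← hj0]
    exact (s1.trans s2).trans s3
  · have s3 : Reach n m ((n:ℤ), 0) (0, 0) := reach_up hno hm1 le_rfl (by omega)
    exact ((s1.trans s2).trans s3).trans (reach_row hno hm1 h0 h1 (by omega) h3)

end CA
namespace CA
variable {n m : ℕ}

lemma suc_cases (n m : ℕ) (i j : ℤ) :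
    suc n m (i, j) = (i, j+1) ∨ suc n m (i, j) = (i, j-1) ∨
    suc n m (i, j) = (i+1, j) ∨ suc n m (i, j) = (i-1, j) := by
  unfold suc
  split_ifs <;> simp

lemma suc_inside (hno : (n:ℤ) % 2 = 1) (hm1 : 1 ≤ (m:ℤ)) {i j : ℤ}
    (h0 : 0 ≤ i) (h1 : i ≤ (n:ℤ)) (h2 : 0 ≤ j) (h3 : j ≤ (m:ℤ) + 1) :
    0 ≤ (suc n m (i, j)).1 ∧ (suc n m (i, j)).1 ≤ (n:ℤ) ∧
    0 ≤ (suc n m (i, j)).2 ∧ (suc n m (i, j)).2 ≤ (m:ℤ) + 1 := by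
  unfold suc
  split_ifs <;>
    (simp only [Prod.mk.injEq, Int.even_iff, Int.odd_iff, ne_eq] at *; omega)

/-- For a valid non-quiescent state, the coordinates and label are defined
and the coordinates lie in the rectangle. -/
lemma valid_ne_q {s : CellState} (hv : ValidState n m s) (hq : s ≠ qState) :
    ∃ (i j : ℤ) (b : Bool), s.coord = (some i, some j) ∧ s.label = some b ∧
      0 ≤ i ∧ i ≤ (n:ℤ) ∧ 0 ≤ j ∧ j ≤ (m:ℤ) + 1 := by
  rcases hv with ⟨l, rfl⟩ | ⟨i, l, h1, h2, rfl⟩ | ⟨j, a, l, h1, h2, rfl⟩ | ⟨l, rfl⟩ |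
    ⟨i, pc, l, h1, h2, rfl⟩ | ⟨i, j, fl, a, pd, l, h1, h2, h3, h4, h5, rfl⟩ | rfl
  · exact ⟨0, 0, l, rfl, rfl, le_rfl, by omega, le_rfl, by omega⟩
  · exact ⟨i, 0, l, rfl, rfl, by omega, h2, le_rfl, by omega⟩
  · exact ⟨0, j, l, rfl, rfl, le_rfl, by omega, by omega, by omega⟩
  · exact ⟨0, (m:ℤ)+1, l, rfl, rfl, le_rfl, by omega, by omega, le_rfl⟩
  · exact ⟨i, (m:ℤ)+1, l, rfl, rfl, by omega, h2, by omega, le_rfl⟩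
  · exact ⟨i, j, l, rfl, rfl, by omega, h2, by omega, by omega⟩
  · exact absurd rfl hq

lemma coord_some_ne_q {s : CellState} {i j : ℤ} (h : s.coord = (some i, some j)) :
    s ≠ qState := by
  intro hq
  rw [hq] at h
  simp [qState] at h

lemma cfg_q_iff {C : Cfg} (hC : IsConfig n m C) (p : ℤ × ℤ) :
    C p = qState ↔ ¬ inside n m p := by
  constructor
  · intro h hin
    exact hC.2.1 p hin h
  · exact hC.2.2 p

/-- Class S6: interior states. -/
lemma valid_interior {s : CellState} (hv : ValidState n m s) {i j : ℤ}
    (hc : s.coord = (some i, some j)) (h1 : 1 ≤ i) (h2 : i ≤ (n:ℤ))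
    (h3 : 1 ≤ j) (h4 : j ≤ (m:ℤ)) :
    ∃ (fl : ℤ) (a pd : Bool) (l : Bool),
      (fl = -1 ∨ fl = 0 ∨ fl = 1) ∧
      s = ⟨(some i, some j), some fl, some a, some pd, none, some l⟩ := by
  rcases hv with ⟨l, rfl⟩ | ⟨i', l, g1, g2, rfl⟩ | ⟨j', a, l, g1, g2, rfl⟩ | ⟨l, rfl⟩ |
    ⟨i', pc, l, g1, g2, rfl⟩ | ⟨i', j', fl, a, pd, l, g1, g2, g3, g4, g5, rfl⟩ | rfl <;>
    simp_all [qState] <;> omega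

/-- Class S5: last-column states. -/
lemma valid_lastcol {s : CellState} (hv : ValidState n m s) {i : ℤ}
    (hc : s.coord = (some i, some ((m:ℤ)+1))) (h1 : 1 ≤ i) :
    ∃ (pc l : Bool), s = ⟨(some i, some ((m:ℤ)+1)), none, none, none, some pc, some l⟩ := by
  rcases hv with ⟨l, rfl⟩ | ⟨i', l, g1, g2, rfl⟩ | ⟨j', a, l, g1, g2, rfl⟩ | ⟨l, rfl⟩ |
    ⟨i', pc, l, g1, g2, rfl⟩ | ⟨i', j', fl, a, pd, l, g1, g2, g3, g4, g5, rfl⟩ | rfl <;>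
    simp_all [qState] <;> omega

end CA
namespace CA
variable {n m : ℕ} {φ : CNF}

lemma cellstate_ext {s s' : CellState} (h1 : s.coord = s'.coord) (h2 : s.flag = s'.flag)
    (h3 : s.aval = s'.aval) (h4 : s.pd = s'.pd) (h5 : s.pc = s'.pc)
    (h6 : s.label = s'.label) : s = s' := by
  cases s; cases s'; simp_all

lemma step_coord {C : Cfg} {p : ℤ × ℤ} : (step φ n m C p).coord = (C p).coord := by
  unfold step; split_ifs <;> rfl
lemma step_flag {C : Cfg} {p : ℤ × ℤ} : (step φ n m C p).flag = (C p).flag := by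
  unfold step; split_ifs <;> rfl
lemma step_aval {C : Cfg} {p : ℤ × ℤ} : (step φ n m C p).aval = (C p).aval := by
  unfold step; split_ifs <;> rfl
lemma step_pd {C : Cfg} {p : ℤ × ℤ} : (step φ n m C p).pd = (C p).pd := by
  unfold step; split_ifs <;> rfl
lemma step_pc {C : Cfg} {p : ℤ × ℤ} : (step φ n m C p).pc = (C p).pc := by
  unfold step; split_ifs <;> rfl

lemma similar_of_step_eq {C C' : Cfg} (h : step φ n m C = step φ n m C') :
    Similar C C' := by
  intro p
  have hp := congrFun h p
  refine ⟨?_, ?_, ?_, ?_, ?_⟩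
  · rw [← @step_coord n m φ C p, ← @step_coord n m φ C' p, hp]
  · rw [← @step_flag n m φ C p, ← @step_flag n m φ C' p, hp]
  · rw [← @step_aval n m φ C p, ← @step_aval n m φ C' p, hp]
  · rw [← @step_pd n m φ C p, ← @step_pd n m φ C' p, hp]
  · rw [← @step_pc n m φ C p, ← @step_pc n m φ C' p, hp]

lemma similar_symm {C C' : Cfg} (h : Similar C C') : Similar C' C := by
  intro p
  obtain ⟨h1, h2, h3, h4, h5⟩ := h p
  exact ⟨h1.symm, h2.symm, h3.symm, h4.symm, h5.symm⟩

lemma similar_blue {C C' : Cfg} {p : ℤ × ℤ} (hs : Similar C C')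
    (hq : ∀ r, C r = qState ↔ C' r = qState) (hb : Blue φ n m C p) :
    Blue φ n m C' p := by
  have h1 : ∀ r, (C r).coord = (C' r).coord := fun r => (hs r).1
  have h2 : ∀ r, (C r).flag = (C' r).flag := fun r => (hs r).2.1
  have h3 : ∀ r, (C r).aval = (C' r).aval := fun r => (hs r).2.2.1
  have h4 : ∀ r, (C r).pd = (C' r).pd := fun r => (hs r).2.2.2.1
  have h5 : ∀ r, (C r).pc = (C' r).pc := fun r => (hs r).2.2.2.2
  unfold Blue LocallyCorrect ruleA ruleB ruleC1 ruleC2 ruleC3 ruleD1 ruleD2 ruleE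
    nbrCoordOK litHolds at hb ⊢
  simp only [ne_eq, h1, h2, h3, h4, h5, hq] at hb ⊢
  exact hb

lemma similar_succPos {C C' : Cfg} (hs : Similar C C') (p : ℤ × ℤ) :
    succPos n m C p = succPos n m C' p := by
  unfold succPos
  rw [(hs p).1]

end CA
namespace CA
variable {n m : ℕ} {φ : CNF} {C C' : Cfg}

lemma q_iff_q (hC : IsConfig n m C) (hC' : IsConfig n m C') (r : ℤ × ℤ) :
    C r = qState ↔ C' r = qState := by
  rw [cfg_q_iff hC, cfg_q_iff hC']

lemma diff_blue (hC : IsConfig n m C) (hC' : IsConfig n m C')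
    (hstep : step φ n m C = step φ n m C') {p : ℤ × ℤ} (hne : C p ≠ C' p) :
    Blue φ n m C p := by
  by_contra hb
  have hb' : ¬ Blue φ n m C' p := fun h =>
    hb (similar_blue (similar_symm (similar_of_step_eq hstep))
      (fun r => (q_iff_q hC hC' r).symm) h)
  have hp := congrFun hstep p
  unfold step at hp
  rw [if_neg hb, if_neg hb'] at hp
  exact hne hp

lemma xor_cancel {b b' c : Bool} (h : Bool.xor b c = Bool.xor b' c) : b = b' := by
  cases b <;> cases b' <;> cases c <;> simp_all

lemma diff_ne_of_eq_label (hsim : Similar C C') {p : ℤ × ℤ}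
    (hl : (C p).label = (C' p).label) : C p = C' p := by
  obtain ⟨h1, h2, h3, h4, h5⟩ := hsim p
  exact cellstate_ext h1 h2 h3 h4 h5 hl

/-- A differing cell propagates difference to its successor position. -/
lemma diff_succ (hno : (n:ℤ) % 2 = 1) (hm1 : 1 ≤ (m:ℤ))
    (hC : IsConfig n m C) (hC' : IsConfig n m C')
    (hstep : step φ n m C = step φ n m C')
    {p : ℤ × ℤ} {i j : ℤ} (hne : C p ≠ C' p)
    (hcoord : (C p).coord = (some i, some j)) :
    C (p.1 + ((suc n m (i,j)).1 - i), p.2 + ((suc n m (i,j)).2 - j)) ≠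
      C' (p.1 + ((suc n m (i,j)).1 - i), p.2 + ((suc n m (i,j)).2 - j)) ∧
    (C (p.1 + ((suc n m (i,j)).1 - i), p.2 + ((suc n m (i,j)).2 - j))).coord =
      (some (suc n m (i,j)).1, some (suc n m (i,j)).2) := by
  have hsim := similar_of_step_eq hstep
  have hblue : Blue φ n m C p := diff_blue hC hC' hstep hne
  have hblue' : Blue φ n m C' p := similar_blue hsim (q_iff_q hC hC') hblue
  obtain ⟨i', j', b, hc', hlb, hr1, hr2, hr3, hr4⟩ :=
    valid_ne_q (hC.1 p) (coord_some_ne_q hcoord)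
  rw [hcoord] at hc'
  have hii : i = i' ∧ j = j' := by simpa [Prod.ext_iff] using hc'
  obtain ⟨rfl, rfl⟩ := hii
  have hA := (hblue.2.1.1 i j hr1 hr2 hr3 hr4).mp hcoord
  have hins := suc_inside hno hm1 hr1 hr2 hr3 hr4
  have hqcoord : (C (p.1 + ((suc n m (i,j)).1 - i), p.2 + ((suc n m (i,j)).2 - j))).coord
      = (some (suc n m (i,j)).1, some (suc n m (i,j)).2) := by
    rcases suc_cases n m i j with hs | hs | hs | hs <;> rw [hs] at hins ⊢
    · have h1 : ((p.1 + ((i, j+1).1 - i), p.2 + ((i, j+1).2 - j)) : ℤ × ℤ) = rightN p := by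
        simp only [rightN, Prod.mk.injEq]
        constructor <;> ring
      rw [h1]
      exact hA.1.1 ⟨hr1, hr2, by omega, hins.2.2.2⟩
    · have h1 : ((p.1 + ((i, j-1).1 - i), p.2 + ((i, j-1).2 - j)) : ℤ × ℤ) = leftN p := by
        simp only [leftN, Prod.mk.injEq]
        constructor <;> ring
      rw [h1]
      exact hA.2.1.1 ⟨hr1, hr2, hins.2.2.1, by omega⟩
    · have h1 : ((p.1 + ((i+1, j).1 - i), p.2 + ((i+1, j).2 - j)) : ℤ × ℤ) = belowN p := by
        simp only [belowN, Prod.mk.injEq]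
        constructor <;> ring
      rw [h1]
      exact hA.2.2.1.1 ⟨by omega, hins.2.1, hr3, hr4⟩
    · have h1 : ((p.1 + ((i-1, j).1 - i), p.2 + ((i-1, j).2 - j)) : ℤ × ℤ) = aboveN p := by
        simp only [aboveN, Prod.mk.injEq]
        constructor <;> ring
      rw [h1]
      exact hA.2.2.2.1 ⟨hins.1, by omega, hr3, hr4⟩
  set q : ℤ × ℤ := (p.1 + ((suc n m (i,j)).1 - i), p.2 + ((suc n m (i,j)).2 - j))
  obtain ⟨i2, j2, c, hc2, hlc, _⟩ := valid_ne_q (hC.1 q) (coord_some_ne_q hqcoord)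
  have hq'coord : (C' q).coord = (some (suc n m (i,j)).1, some (suc n m (i,j)).2) := by
    rw [← (hsim q).1]; exact hqcoord
  obtain ⟨i3, j3, c', hc2', hlc', _⟩ := valid_ne_q (hC'.1 q) (coord_some_ne_q hq'coord)
  obtain ⟨i4, j4, b', hc1', hlb', _⟩ := valid_ne_q (hC'.1 p)
    (coord_some_ne_q (((hsim p).1).symm.trans hcoord))
  have hsp : succPos n m C p = q := by
    unfold succPos
    rw [hcoord]
  have hsp' : succPos n m C' p = q := by rw [← similar_succPos hsim]; exact hsp
  have hp := congrFun hstep p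
  unfold step at hp
  rw [if_pos hblue, if_pos hblue', hsp, hsp'] at hp
  have hlab := congrArg CellState.label hp
  simp only [hlb, hlb', hlc, hlc'] at hlab
  have hxor : Bool.xor b c = Bool.xor b' c' := by
    simpa [Option.map₂] using hlab
  have hbb : b ≠ b' := by
    intro hbb
    exact hne (diff_ne_of_eq_label hsim (by rw [hlb, hlb', hbb]))
  have hcc : c ≠ c' := by
    intro hcc
    rw [hcc] at hxor
    exact hbb (xor_cancel hxor)
  refine ⟨fun heq => hcc ?_, hqcoord⟩
  have h2 := hlc.symm.trans ((congrArg CellState.label heq).trans hlc')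
  simpa using h2

end CA
namespace CA
variable {n m : ℕ} {φ : CNF} {C C' : Cfg}

lemma diff_reach (hno : (n:ℤ) % 2 = 1) (hm1 : 1 ≤ (m:ℤ))
    (hC : IsConfig n m C) (hC' : IsConfig n m C')
    (hstep : step φ n m C = step φ n m C')
    {p : ℤ × ℤ} {i j : ℤ} (hne : C p ≠ C' p)
    (hcoord : (C p).coord = (some i, some j)) :
    ∀ c : ℤ × ℤ, Reach n m (i, j) c →
      C (p.1 + (c.1 - i), p.2 + (c.2 - j)) ≠ C' (p.1 + (c.1 - i), p.2 + (c.2 - j)) ∧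
      (C (p.1 + (c.1 - i), p.2 + (c.2 - j))).coord = (some c.1, some c.2) := by
  intro c hr
  unfold Reach at hr
  induction hr with
  | refl =>
    have hpos : ((p.1 + ((i, j).1 - i), p.2 + ((i, j).2 - j)) : ℤ × ℤ) = p := by
      rw [Prod.ext_iff]
      constructor <;> simp
    rw [hpos]
    exact ⟨hne, hcoord⟩
  | @tail b c hab hbc ih =>
    have hb := ih
    set q : ℤ × ℤ := (p.1 + (b.1 - i), p.2 + (b.2 - j)) with hq
    have hbpair : ((b.1, b.2) : ℤ × ℤ) = b := rfl
    have hds := diff_succ hno hm1 hC hC' hstep hb.1 (by rw [hb.2])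
    rw [hbpair] at hds
    have hcs : c = suc n m b := hbc
    have hpos : ((q.1 + ((suc n m b).1 - b.1), q.2 + ((suc n m b).2 - b.2)) : ℤ × ℤ)
        = (p.1 + (c.1 - i), p.2 + (c.2 - j)) := by
      rw [hcs, hq]
      simp only [Prod.mk.injEq]
      constructor <;> ring
    rw [hpos] at hds
    rw [← hcs] at hds
    exact hds

lemma eq_of_step_eq_of_not_sat (hn : 1 ≤ n) (hnodd : Odd n) (hm : 1 ≤ m)
    (hunsat : ¬ Satisfiable φ n m) (hC : IsConfig n m C) (hC' : IsConfig n m C')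
    (hstep : step φ n m C = step φ n m C') : C = C' := by
  have hno : (n:ℤ) % 2 = 1 := by
    obtain ⟨k, hk⟩ := hnodd
    subst hk
    push_cast
    omega
  have hm1 : 1 ≤ (m:ℤ) := by exact_mod_cast hm
  have hn1 : 1 ≤ (n:ℤ) := by exact_mod_cast hn
  by_contra hnethm
  obtain ⟨p, hp⟩ : ∃ p, C p ≠ C' p := by
    by_contra h
    push_neg at h
    exact hnethm (funext h)
  have hinp : inside n m p := by
    by_contra hout
    exact hp ((hC.2.2 p hout).trans (hC'.2.2 p hout).symm)
  have hpq : C p ≠ qState := hC.2.1 p hinp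
  obtain ⟨i, j, b, hcoord, hlab, hr1, hr2, hr3, hr4⟩ := valid_ne_q (hC.1 p) hpq
  have hreach : ∀ c : ℤ × ℤ, 0 ≤ c.1 → c.1 ≤ (n:ℤ) → 0 ≤ c.2 → c.2 ≤ (m:ℤ)+1 →
      Reach n m (i, j) c := by
    intro c u1 u2 u3 u4
    have h2 : Reach n m ((n:ℤ), (m:ℤ)+1) (c.1, c.2) := reach_from_out hno hm1 u1 u2 u3 u4
    exact (reach_to_out hno hm1 hr1 hr2 hr3 hr4).trans (by simpa using h2)
  have hdiff := diff_reach hno hm1 hC hC' hstep hp hcoord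
  -- the offset is zero
  have h00 := hdiff (0, 0) (hreach (0, 0) le_rfl (by omega) le_rfl (by omega))
  have hnm := hdiff ((n:ℤ), (m:ℤ)+1)
    (hreach ((n:ℤ), (m:ℤ)+1) (by simp) (by simp) (by simp; omega) (by simp))
  have hin00 : inside n m (p.1 + ((0:ℤ) - i), p.2 + ((0:ℤ) - j)) := by
    by_contra hout
    exact h00.1 ((hC.2.2 _ hout).trans (hC'.2.2 _ hout).symm)
  have hinnm : inside n m (p.1 + ((n:ℤ) - i), p.2 + (((m:ℤ)+1) - j)) := by
    by_contra hout
    exact hnm.1 ((hC.2.2 _ hout).trans (hC'.2.2 _ hout).symm)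
  obtain ⟨g1, g2, g3, g4⟩ := hin00
  obtain ⟨g5, g6, g7, g8⟩ := hinnm
  have hpi : p.1 = i ∧ p.2 = j := by omega
  -- every rectangle cell is blue with aligned coordinates
  have hAll : ∀ c : ℤ × ℤ, 0 ≤ c.1 → c.1 ≤ (n:ℤ) → 0 ≤ c.2 → c.2 ≤ (m:ℤ)+1 →
      Blue φ n m C c ∧ (C c).coord = (some c.1, some c.2) := by
    intro c u1 u2 u3 u4
    have hd := hdiff c (hreach c u1 u2 u3 u4)
    have hcpos : ((p.1 + (c.1 - i), p.2 + (c.2 - j)) : ℤ × ℤ) = c := by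
      rw [Prod.ext_iff]
      constructor <;> omega
    rw [hcpos] at hd
    exact ⟨diff_blue hC hC' hstep hd.1, hd.2⟩
  -- the satisfying assignment read off row 1
  set a : ℤ → Bool := fun j' => ((C (1, j')).aval).getD false with ha
  -- interior states
  have hint : ∀ i' j' : ℤ, 1 ≤ i' → i' ≤ (n:ℤ) → 1 ≤ j' → j' ≤ (m:ℤ) →
      ∃ (fl : ℤ) (av pd l : Bool), (fl = -1 ∨ fl = 0 ∨ fl = 1) ∧
        C (i', j') = ⟨(some i', some j'), some fl, some av, some pd, none, some l⟩ := by
    intro i' j' u1 u2 u3 u4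
    exact valid_interior (hC.1 (i', j'))
      ((hAll (i', j') (by omega) (by omega) (by omega) (by omega)).2) u1 u2 u3 u4
  -- aval is constant along columns
  have H1 : ∀ i' : ℤ, 1 ≤ i' → ∀ j' : ℤ, 1 ≤ j' → j' ≤ (m:ℤ) → i' ≤ (n:ℤ) →
      (C (i', j')).aval = (C (1, j')).aval := by
    refine Int.le_induction ?_ ?_
    · intro j' _ _ _
      rfl
    · intro i' hi' ih j' u1 u2 u3
      have hb := hAll (i', j') (by omega) (by omega) (by omega) (by omega)
      have hC1 := hb.1.2.1.2.2.1 i' j' hb.2 u1 u2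
      have hins : inside n m (belowN ((i':ℤ), j')) :=
        ⟨by simp [belowN]; omega, by simp [belowN]; omega,
         by simp [belowN]; omega, by simp [belowN]; omega⟩
      have hbel : (C (belowN ((i':ℤ), j'))).aval = (C (i', j')).aval := hC1.2 hins
      have hbeq : belowN ((i':ℤ), j') = (i' + 1, j') := rfl
      rw [hbeq] at hbel
      rw [hbel]
      exact ih j' u1 u2 (by omega)
  have H1' : ∀ i' j' : ℤ, 1 ≤ i' → i' ≤ (n:ℤ) → 1 ≤ j' → j' ≤ (m:ℤ) →
      (C (i', j')).aval = some (a j') := by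
    intro i' j' u1 u2 u3 u4
    obtain ⟨fl, av, pd, l, _, hs⟩ := hint 1 j' le_rfl hn1 u3 u4
    rw [H1 i' u1 j' u3 u4 u2, ha]
    simp [hs]
  -- a satisfied literal in a cell gives a satisfied literal of φ
  have H2 : ∀ i' j' : ℤ, 1 ≤ i' → i' ≤ (n:ℤ) → 1 ≤ j' → j' ≤ (m:ℤ) →
      litHolds C (i', j') → litSat φ a i' j' := by
    intro i' j' u1 u2 u3 u4 hl
    have hb := hAll (i', j') (by omega) (by omega) (by omega) (by omega)
    have hB := hb.1.2.1.2.1 i' j' hb.2 u1 u2 u3 u4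
    have hav := H1' i' j' u1 u2 u3 u4
    rcases hl with ⟨hf, hv⟩ | ⟨hf, hv⟩
    · left
      refine ⟨hB.1.mp hf, ?_⟩
      rw [hav] at hv
      simpa using hv.symm
    · right
      refine ⟨hB.2.1.mp hf, ?_⟩
      rw [hav] at hv
      simpa using hv.symm
  -- partial disjunctions
  have H3 : ∀ i' : ℤ, 1 ≤ i' → i' ≤ (n:ℤ) → ∀ j' : ℤ, 1 ≤ j' → j' ≤ (m:ℤ) →
      (C (i', j')).pd = some true → ∃ u : ℤ, 1 ≤ u ∧ u ≤ j' ∧ litSat φ a i' u := by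
    intro i' v1 v2
    refine Int.le_induction ?_ ?_
    · intro _ hpd
      have hb := hAll (i', 1) (by omega) (by omega) (by omega) (by omega)
      have hD2 := hb.1.2.1.2.2.2.2.2.2.1 i' hb.2 v1 v2
      exact ⟨1, le_rfl, le_rfl, H2 i' 1 v1 v2 le_rfl hm1 (hD2.mp hpd)⟩
    · intro j' hj' ih u2 hpd
      have hb := hAll (i', j'+1) (by omega) (by omega) (by omega) (by omega)
      have hD1 := hb.1.2.1.2.2.2.2.2.1 i' (j'+1) hb.2 v1 v2 (by omega) u2
      rcases hD1.mp hpd with hleft | hlit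
      · have hleq : leftN ((i':ℤ), j'+1) = (i', j') := by
          simp [leftN]
        rw [hleq] at hleft
        obtain ⟨u, w1, w2, w3⟩ := ih (by omega) hleft
        exact ⟨u, w1, by omega, w3⟩
      · exact ⟨j'+1, by omega, le_rfl, H2 i' (j'+1) v1 v2 (by omega) u2 hlit⟩
  -- partial conjunctions
  have H4 : ∀ i' : ℤ, 1 ≤ i' → i' ≤ (n:ℤ) →
      (C (i', (m:ℤ)+1)).pc = some true → ∀ v : ℤ, 1 ≤ v → v ≤ i' → clauseSat φ a m v := by
    refine Int.le_induction ?_ ?_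
    · intro _ hpc v w1 w2
      have hb := hAll (1, (m:ℤ)+1) (by omega) (by omega) (by omega) (by omega)
      have hC3 := hb.1.2.1.2.2.2.2.1 hb.2
      have hleq : leftN ((1:ℤ), (m:ℤ)+1) = (1, (m:ℤ)) := by simp [leftN]
      have hpd : (C ((1:ℤ), (m:ℤ))).pd = some true := by
        rw [← hleq]
        exact hC3.mp hpc
      obtain ⟨u, w3, w4, w5⟩ := H3 1 le_rfl hn1 (m:ℤ) hm1 le_rfl hpd
      have hv1 : v = 1 := by omega
      subst hv1
      exact ⟨u, w3, w4, w5⟩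
    · intro i' hi' ih u2 hpc v w1 w2
      have hb := hAll (i'+1, (m:ℤ)+1) (by omega) (by omega) (by omega) (by omega)
      have hC2 := hb.1.2.1.2.2.2.1 (i'+1) hb.2 (by omega)
      obtain ⟨habove, hleft⟩ := hC2.mp hpc
      have haeq : aboveN ((i':ℤ)+1, (m:ℤ)+1) = (i', (m:ℤ)+1) := by simp [aboveN]
      have hleq : leftN ((i':ℤ)+1, (m:ℤ)+1) = (i'+1, (m:ℤ)) := by simp [leftN]
      rw [haeq] at habove
      rw [hleq] at hleft
      rcases eq_or_lt_of_le w2 with hv | hv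
      · obtain ⟨u, w3, w4, w5⟩ := H3 (i'+1) (by omega) u2 (m:ℤ) hm1 le_rfl hleft
        subst hv
        exact ⟨u, w3, w4, w5⟩
      · exact ih (by omega) habove v w1 (by omega)
  -- the output cell gives satisfiability
  have hout := hAll ((n:ℤ), (m:ℤ)+1) (by simp) (by simp) (by simp; omega) (by simp)
  have hpc : (C ((n:ℤ), (m:ℤ)+1)).pc = some true := hout.1.2.2 hout.2
  exact hunsat ⟨a, fun i0 w1 w2 => H4 (n:ℤ) hn1 le_rfl hpc i0 w1 w2⟩

end CA
namespace CA
variable {n m : ℕ} {φ : CNF} {a : ℤ → Bool}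

open scoped Classical in
/-- The all-label-`true` variant of the computation table. -/
noncomputable def TableT (φ : CNF) (n m : ℕ) (a : ℤ → Bool) : Cfg := fun p =>
  if inside n m p then { Table φ n m a p with label := some true } else qState

lemma table_out {p : ℤ × ℤ} (h : ¬ inside n m p) : Table φ n m a p = qState := by
  rw [Table, if_neg h]

lemma tableT_out {p : ℤ × ℤ} (h : ¬ inside n m p) : TableT φ n m a p = qState := by
  rw [TableT, if_neg h]

lemma table_coord {p : ℤ × ℤ} (h : inside n m p) :
    (Table φ n m a p).coord = (some p.1, some p.2) := by
  rw [Table, if_pos h]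

lemma table_label {p : ℤ × ℤ} (h : inside n m p) :
    (Table φ n m a p).label = some false := by
  rw [Table, if_pos h]

lemma tableT_label {p : ℤ × ℤ} (h : inside n m p) :
    (TableT φ n m a p).label = some true := by
  rw [TableT, if_pos h]

lemma table_flag {p : ℤ × ℤ} (h : inside n m p) :
    (Table φ n m a p).flag = if 1 ≤ p.1 ∧ p.1 ≤ (n:ℤ) ∧ 1 ≤ p.2 ∧ p.2 ≤ (m:ℤ) then
      some (flagInt (φ p.1 p.2)) else none := by
  rw [Table, if_pos h]

lemma table_aval {p : ℤ × ℤ} (h : inside n m p) :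
    (Table φ n m a p).aval = if 1 ≤ p.2 ∧ p.2 ≤ (m:ℤ) then some (a p.2) else none := by
  rw [Table, if_pos h]

lemma table_pd {p : ℤ × ℤ} (h : inside n m p) :
    (Table φ n m a p).pd = if 1 ≤ p.1 ∧ p.1 ≤ (n:ℤ) ∧ 1 ≤ p.2 ∧ p.2 ≤ (m:ℤ) then
      some (pdVal φ a p.1 p.2) else none := by
  rw [Table, if_pos h]

lemma table_pc {p : ℤ × ℤ} (h : inside n m p) :
    (Table φ n m a p).pc = if 1 ≤ p.1 ∧ p.1 ≤ (n:ℤ) ∧ p.2 = (m:ℤ) + 1 then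
      some (pcVal φ a m p.1) else none := by
  rw [Table, if_pos h]

lemma table_ne_q {p : ℤ × ℤ} (h : inside n m p) : Table φ n m a p ≠ qState := by
  intro hq
  have := congrArg CellState.label hq
  rw [table_label h] at this
  simp [qState] at this

lemma similar_table : Similar (Table φ n m a) (TableT φ n m a) := by
  intro p
  by_cases h : inside n m p
  · rw [Table, if_pos h, TableT, if_pos h, Table, if_pos h]
    exact ⟨rfl, rfl, rfl, rfl, rfl⟩
  · rw [table_out h, tableT_out h]
    exact ⟨rfl, rfl, rfl, rfl, rfl⟩

lemma table_q_iff (r : ℤ × ℤ) : Table φ n m a r = qState ↔ TableT φ n m a r = qState := by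
  constructor
  · intro h
    by_cases hin : inside n m r
    · exact absurd h (table_ne_q hin)
    · exact tableT_out hin
  · intro h
    by_cases hin : inside n m r
    · exfalso
      have := congrArg CellState.label h
      rw [tableT_label hin] at this
      simp [qState] at this
    · exact table_out hin

lemma table_valid (p : ℤ × ℤ) : ValidState n m (Table φ n m a p) := by
  by_cases h : inside n m p
  swap
  · rw [table_out h]
    exact Or.inr (Or.inr (Or.inr (Or.inr (Or.inr (Or.inr rfl)))))
  have h' := h
  obtain ⟨h1, h2, h3, h4⟩ := h'
  rw [Table, if_pos h]
  by_cases c1 : 1 ≤ p.1 ∧ p.1 ≤ (n:ℤ) ∧ 1 ≤ p.2 ∧ p.2 ≤ (m:ℤ)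
  · simp only [if_pos c1, if_pos (⟨c1.2.2.1, c1.2.2.2⟩ : 1 ≤ p.2 ∧ p.2 ≤ (m:ℤ)),
      if_neg (by omega : ¬(1 ≤ p.1 ∧ p.1 ≤ (n:ℤ) ∧ p.2 = (m:ℤ)+1))]
    refine Or.inr (Or.inr (Or.inr (Or.inr (Or.inr (Or.inl
      ⟨p.1, p.2, flagInt (φ p.1 p.2), a p.2, pdVal φ a p.1 p.2, false,
        c1.1, c1.2.1, c1.2.2.1, c1.2.2.2, ?_, rfl⟩)))))
    rcases φ p.1 p.2 with _ | b
    · simp [flagInt]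
    · cases b <;> simp [flagInt]
  · simp only [if_neg c1]
    by_cases c2 : 1 ≤ p.2 ∧ p.2 ≤ (m:ℤ)
    · have hp1 : p.1 = 0 := by omega
      simp only [if_pos c2, if_neg (by omega : ¬(1 ≤ p.1 ∧ p.1 ≤ (n:ℤ) ∧ p.2 = (m:ℤ)+1))]
      rw [hp1]
      exact Or.inr (Or.inr (Or.inl ⟨p.2, a p.2, false, c2.1, c2.2, rfl⟩))
    · simp only [if_neg c2]
      by_cases c3 : 1 ≤ p.1 ∧ p.1 ≤ (n:ℤ) ∧ p.2 = (m:ℤ)+1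
      · simp only [if_pos c3]
        rw [c3.2.2]
        exact Or.inr (Or.inr (Or.inr (Or.inr (Or.inl
          ⟨p.1, pcVal φ a m p.1, false, c3.1, c3.2.1, rfl⟩))))
      · simp only [if_neg c3]
        by_cases hj : p.2 = 0
        · by_cases hi : p.1 = 0
          · rw [hi, hj]
            exact Or.inl ⟨false, rfl⟩
          · rw [hj]
            exact Or.inr (Or.inl ⟨p.1, false, by omega, h2, rfl⟩)
        · have hp1 : p.1 = 0 := by omega
          have hp2 : p.2 = (m:ℤ)+1 := by omega
          rw [hp1, hp2]
          exact Or.inr (Or.inr (Or.inr (Or.inl ⟨false, rfl⟩)))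

lemma table_isConfig : IsConfig n m (Table φ n m a) := by
  refine ⟨table_valid, fun p h => table_ne_q h, fun p h => table_out h⟩

lemma tableT_valid (p : ℤ × ℤ) : ValidState n m (TableT φ n m a p) := by
  by_cases h : inside n m p
  · have hv := table_valid (φ := φ) (a := a) (n := n) (m := m) p
    rw [TableT, if_pos h]
    rw [Table, if_pos h] at hv ⊢
    unfold ValidState at hv ⊢
    rcases hv with ⟨l, hl⟩ | ⟨i, l, h1, h2, hl⟩ | ⟨j, av, l, h1, h2, hl⟩ | ⟨l, hl⟩ |
      ⟨i, pc, l, h1, h2, hl⟩ | ⟨i, j, fl, av, pd, l, h1, h2, h3, h4, h5, hl⟩ | hl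
    · exact Or.inl ⟨true, by rw [hl]⟩
    · exact Or.inr (Or.inl ⟨i, true, h1, h2, by rw [hl]⟩)
    · exact Or.inr (Or.inr (Or.inl ⟨j, av, true, h1, h2, by rw [hl]⟩))
    · exact Or.inr (Or.inr (Or.inr (Or.inl ⟨true, by rw [hl]⟩)))
    · exact Or.inr (Or.inr (Or.inr (Or.inr (Or.inl ⟨i, pc, true, h1, h2, by rw [hl]⟩))))
    · exact Or.inr (Or.inr (Or.inr (Or.inr (Or.inr (Or.inl
        ⟨i, j, fl, av, pd, true, h1, h2, h3, h4, h5, by rw [hl]⟩)))))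
    · exfalso
      have := congrArg CellState.label hl
      simp [qState] at this
  · rw [tableT_out h]
    exact Or.inr (Or.inr (Or.inr (Or.inr (Or.inr (Or.inr rfl)))))

lemma tableT_isConfig : IsConfig n m (TableT φ n m a) := by
  refine ⟨tableT_valid, fun p h hq => ?_, fun p h => tableT_out h⟩
  have := congrArg CellState.label hq
  rw [tableT_label h] at this
  simp [qState] at this

lemma pcVal_true_iff {i : ℤ} :
    pcVal φ a m i = true ↔ ∀ v : ℤ, 1 ≤ v → v ≤ i → clauseSat φ a m v := by
  rw [pcVal]
  exact @decide_eq_true_iff _ (Classical.propDecidable _)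

lemma pdVal_true_iff {i j : ℤ} :
    pdVal φ a i j = true ↔ ∃ u : ℤ, 1 ≤ u ∧ u ≤ j ∧ litSat φ a i u := by
  rw [pdVal]
  exact @decide_eq_true_iff _ (Classical.propDecidable _)

end CA
namespace CA
variable {n m : ℕ} {φ : CNF} {a : ℤ → Bool}

lemma table_nbrOK (q : ℤ × ℤ) : nbrCoordOK n m (Table φ n m a) q q :=
  ⟨fun h => table_coord h, fun h => table_out h⟩

lemma table_litHolds {p : ℤ × ℤ} (hin : inside n m p) (u1 : 1 ≤ p.1)
    (u2 : p.1 ≤ (n:ℤ)) (u3 : 1 ≤ p.2) (u4 : p.2 ≤ (m:ℤ)) :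
    litHolds (Table φ n m a) p ↔ litSat φ a p.1 p.2 := by
  unfold litHolds litSat
  rw [table_flag hin, table_aval hin, if_pos ⟨u1, u2, u3, u4⟩, if_pos ⟨u3, u4⟩]
  rcases hφ : φ p.1 p.2 with _ | b
  · simp [flagInt]
  · cases b <;> simp [flagInt]

lemma table_blue (hno : (n:ℤ) % 2 = 1) (hm1 : 1 ≤ (m:ℤ)) (hn1 : 1 ≤ (n:ℤ))
    (hsat : ∀ i : ℤ, 1 ≤ i → i ≤ (n:ℤ) → clauseSat φ a m i)
    {p : ℤ × ℤ} (hin : inside n m p) : Blue φ n m (Table φ n m a) p := by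
  obtain ⟨q1, q2, q3, q4⟩ := hin
  have hin : inside n m p := ⟨q1, q2, q3, q4⟩
  refine ⟨table_ne_q hin, ⟨?_, ?_, ?_, ?_, ?_, ?_, ?_, ?_⟩, ?_⟩
  -- ruleA
  · intro i j u1 u2 u3 u4
    constructor
    · intro hc
      rw [table_coord hin] at hc
      obtain ⟨hc1, hc2⟩ : p.1 = i ∧ p.2 = j := by simpa [Prod.ext_iff] using hc
      have hr : rightN p = (i, j+1) := by
        rw [rightN, Prod.ext_iff]; constructor <;> simp <;> omega
      have hl : leftN p = (i, j-1) := by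
        rw [leftN, Prod.ext_iff]; constructor <;> simp <;> omega
      have hb : belowN p = (i+1, j) := by
        rw [belowN, Prod.ext_iff]; constructor <;> simp <;> omega
      have ha : aboveN p = (i-1, j) := by
        rw [aboveN, Prod.ext_iff]; constructor <;> simp <;> omega
      exact ⟨hr ▸ table_nbrOK _, hl ▸ table_nbrOK _, hb ▸ table_nbrOK _, ha ▸ table_nbrOK _⟩
    · rintro ⟨hR, hL, -, -⟩
      rw [table_coord hin]
      by_cases hj : j ≤ (m:ℤ)
      · have hins : inside n m (i, j+1) := ⟨u1, u2, by omega, by omega⟩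
        have h1 := hR.1 hins
        by_cases hrin : inside n m (rightN p)
        · rw [table_coord hrin] at h1
          have h2 : p.1 = i ∧ p.2 + 1 = j + 1 := by simpa [rightN, Prod.ext_iff] using h1
          simp only [Prod.mk.injEq, Option.some.injEq]
          omega
        · rw [table_out hrin] at h1
          simp [qState] at h1
      · have hins : inside n m (i, j-1) := ⟨u1, u2, by omega, by omega⟩
        have h1 := hL.1 hins
        by_cases hlin : inside n m (leftN p)
        · rw [table_coord hlin] at h1
          have h2 : p.1 = i ∧ p.2 - 1 = j - 1 := by simpa [leftN, Prod.ext_iff] using h1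
          simp only [Prod.mk.injEq, Option.some.injEq]
          omega
        · rw [table_out hlin] at h1
          simp [qState] at h1
  -- ruleB
  · intro i j hc u1 u2 u3 u4
    rw [table_coord hin] at hc
    obtain ⟨hc1, hc2⟩ : p.1 = i ∧ p.2 = j := by simpa [Prod.ext_iff] using hc
    subst hc1; subst hc2
    rw [table_flag hin, if_pos ⟨u1, u2, u3, u4⟩]
    rcases hφ : φ p.1 p.2 with _ | b
    · simp [flagInt, hφ]
    · cases b <;> simp [flagInt, hφ]
  -- ruleC1
  · intro i j hc u3 u4
    constructor
    · intro hins
      rw [table_aval hins, table_aval hin]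
      rfl
    · intro hins
      rw [table_aval hins, table_aval hin]
      rfl
  -- ruleC2
  · intro r hc h2
    rw [table_coord hin] at hc
    obtain ⟨hc1, hc2⟩ : p.1 = r ∧ p.2 = (m:ℤ)+1 := by simpa [Prod.ext_iff] using hc
    have hA : aboveN p = (p.1 - 1, p.2) := rfl
    have hL : leftN p = (p.1, p.2 - 1) := rfl
    have hinsA : inside n m (p.1 - 1, p.2) := ⟨by omega, by omega, by omega, by omega⟩
    have hinsL : inside n m (p.1, p.2 - 1) := ⟨by omega, by omega, by omega, by omega⟩
    rw [table_pc hin, if_pos ⟨by omega, by omega, hc2⟩, hA, hL,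
      table_pc hinsA, table_pd hinsL,
      if_pos (⟨by omega, by omega, by omega⟩ :
        1 ≤ ((p.1 - 1, p.2) : ℤ × ℤ).1 ∧ ((p.1 - 1, p.2) : ℤ × ℤ).1 ≤ (n:ℤ) ∧
          ((p.1 - 1, p.2) : ℤ × ℤ).2 = (m:ℤ)+1),
      if_pos (⟨by omega, by omega, by omega, by omega⟩ :
        1 ≤ ((p.1, p.2 - 1) : ℤ × ℤ).1 ∧ ((p.1, p.2 - 1) : ℤ × ℤ).1 ≤ (n:ℤ) ∧
          1 ≤ ((p.1, p.2 - 1) : ℤ × ℤ).2 ∧ ((p.1, p.2 - 1) : ℤ × ℤ).2 ≤ (m:ℤ))]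
    simp only [Option.some.injEq, pcVal_true_iff, pdVal_true_iff]
    have hm2 : p.2 - 1 = (m:ℤ) := by omega
    constructor
    · intro H
      refine ⟨fun v w1 w2 => H v w1 (by omega), ?_⟩
      obtain ⟨u, w1, w2, w3⟩ := H p.1 (by omega) le_rfl
      exact ⟨u, w1, by omega, w3⟩
    · rintro ⟨H1, u, w1, w2, w3⟩ v w4 w5
      rcases eq_or_lt_of_le w5 with hv | hv
      · subst hv
        exact ⟨u, w1, by omega, w3⟩
      · exact H1 v w4 (by omega)
  -- ruleC3
  · intro hc
    rw [table_coord hin] at hc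
    obtain ⟨hc1, hc2⟩ : p.1 = 1 ∧ p.2 = (m:ℤ)+1 := by simpa [Prod.ext_iff] using hc
    have hL : leftN p = (p.1, p.2 - 1) := rfl
    have hinsL : inside n m (p.1, p.2 - 1) := ⟨by omega, by omega, by omega, by omega⟩
    rw [table_pc hin, if_pos ⟨by omega, by omega, hc2⟩, hL, table_pd hinsL,
      if_pos (⟨by omega, by omega, by omega, by omega⟩ :
        1 ≤ ((p.1, p.2 - 1) : ℤ × ℤ).1 ∧ ((p.1, p.2 - 1) : ℤ × ℤ).1 ≤ (n:ℤ) ∧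
          1 ≤ ((p.1, p.2 - 1) : ℤ × ℤ).2 ∧ ((p.1, p.2 - 1) : ℤ × ℤ).2 ≤ (m:ℤ))]
    simp only [Option.some.injEq, pcVal_true_iff, pdVal_true_iff]
    constructor
    · intro H
      obtain ⟨u, w1, w2, w3⟩ := H p.1 (by omega) le_rfl
      exact ⟨u, w1, by omega, by rw [hc1] at w3 ⊢; exact w3⟩
    · rintro ⟨u, w1, w2, w3⟩ v w4 w5
      have hv : v = p.1 := by omega
      subst hv
      exact ⟨u, w1, by omega, w3⟩
  -- ruleD1
  · intro i j hc u1 u2 u3 u4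
    rw [table_coord hin] at hc
    obtain ⟨hc1, hc2⟩ : p.1 = i ∧ p.2 = j := by simpa [Prod.ext_iff] using hc
    subst hc1; subst hc2
    have hL : leftN p = (p.1, p.2 - 1) := rfl
    have hinsL : inside n m (p.1, p.2 - 1) := ⟨by omega, by omega, by omega, by omega⟩
    rw [table_pd hin, if_pos ⟨u1, u2, by omega, u4⟩, hL, table_pd hinsL,
      if_pos (⟨by omega, by omega, by omega, by omega⟩ :
        1 ≤ ((p.1, p.2 - 1) : ℤ × ℤ).1 ∧ ((p.1, p.2 - 1) : ℤ × ℤ).1 ≤ (n:ℤ) ∧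
          1 ≤ ((p.1, p.2 - 1) : ℤ × ℤ).2 ∧ ((p.1, p.2 - 1) : ℤ × ℤ).2 ≤ (m:ℤ)),
      table_litHolds hin (by omega) u2 (by omega) u4]
    simp only [Option.some.injEq, pdVal_true_iff]
    constructor
    · rintro ⟨u, w1, w2, w3⟩
      rcases eq_or_lt_of_le w2 with hu | hu
      · right
        rw [← hu]
        exact w3
      · left
        exact ⟨u, w1, by omega, w3⟩
    · rintro (⟨u, w1, w2, w3⟩ | hl)
      · exact ⟨u, w1, by omega, w3⟩
      · exact ⟨p.2, by omega, le_rfl, hl⟩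
  -- ruleD2
  · intro i hc u1 u2
    rw [table_coord hin] at hc
    obtain ⟨hc1, hc2⟩ : p.1 = i ∧ p.2 = 1 := by simpa [Prod.ext_iff] using hc
    rw [table_pd hin, if_pos ⟨by omega, by omega, by omega, by omega⟩,
      table_litHolds hin (by omega) (by omega) (by omega) (by omega)]
    simp only [Option.some.injEq, pdVal_true_iff]
    constructor
    · rintro ⟨u, w1, w2, w3⟩
      have hu : u = p.2 := by omega
      subst hu
      exact w3
    · intro hl
      exact ⟨p.2, by omega, le_rfl, hl⟩
  -- ruleE
  · intro i j hc
    rw [table_coord hin] at hc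
    obtain ⟨hc1, hc2⟩ : p.1 = i ∧ p.2 = j := by simpa [Prod.ext_iff] using hc
    subst hc1; subst hc2
    refine ⟨?_, ?_, ?_, ?_⟩
    · rintro (h0 | ⟨h0a, h0b⟩ | ⟨h0a, h0b⟩) <;>
        exact ⟨by rw [table_flag hin, if_neg (by omega)],
          by rw [table_aval hin, if_neg (by omega)],
          by rw [table_pd hin, if_neg (by omega)],
          by rw [table_pc hin, if_neg (by omega)]⟩
    · rintro ⟨h0, h1, h2⟩
      exact ⟨by rw [table_flag hin, if_neg (by omega)],
        by rw [table_pd hin, if_neg (by omega)],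
        by rw [table_pc hin, if_neg (by omega)]⟩
    · rintro ⟨h0, h1⟩
      exact ⟨by rw [table_flag hin, if_neg (by omega)],
        by rw [table_aval hin, if_neg (by omega)],
        by rw [table_pd hin, if_neg (by omega)]⟩
    · rintro ⟨h0, h1, h2, h3⟩
      rw [table_pc hin, if_neg (by omega)]
  -- output cell
  · intro hc
    rw [table_coord hin] at hc
    obtain ⟨hc1, hc2⟩ : p.1 = (n:ℤ) ∧ p.2 = (m:ℤ)+1 := by simpa [Prod.ext_iff] using hc
    rw [table_pc hin, if_pos ⟨by omega, by omega, hc2⟩]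
    simp only [Option.some.injEq, pcVal_true_iff]
    intro v w1 w2
    exact hsat v w1 (by omega)

lemma step_table_eq (hno : (n:ℤ) % 2 = 1) (hm1 : 1 ≤ (m:ℤ)) (hn1 : 1 ≤ (n:ℤ))
    (hsat : ∀ i : ℤ, 1 ≤ i → i ≤ (n:ℤ) → clauseSat φ a m i) :
    step φ n m (Table φ n m a) = step φ n m (TableT φ n m a) := by
  funext p
  by_cases hin : inside n m p
  · have hblue := table_blue hno hm1 hn1 hsat hin
    have hblue' : Blue φ n m (TableT φ n m a) p :=
      similar_blue similar_table table_q_iff hblue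
    have hsp : succPos n m (Table φ n m a) p = suc n m (p.1, p.2) := by
      simp only [succPos, table_coord hin]
      rw [Prod.ext_iff]
      constructor <;> omega
    have hsp' : succPos n m (TableT φ n m a) p = suc n m (p.1, p.2) := by
      rw [← similar_succPos similar_table]
      exact hsp
    have hsin : inside n m (suc n m (p.1, p.2)) :=
      suc_inside hno hm1 hin.1 hin.2.1 hin.2.2.1 hin.2.2.2
    unfold step
    rw [if_pos hblue, if_pos hblue', hsp, hsp']
    refine cellstate_ext ?_ ?_ ?_ ?_ ?_ ?_
    · exact (similar_table p).1
    · exact (similar_table p).2.1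
    · exact (similar_table p).2.2.1
    · exact (similar_table p).2.2.2.1
    · exact (similar_table p).2.2.2.2
    · show Option.map₂ _ _ _ = Option.map₂ _ _ _
      rw [table_label hin, tableT_label hin, table_label hsin, tableT_label hsin]
      rfl
  · have hb : ¬ Blue φ n m (Table φ n m a) p := fun h => h.1 (table_out hin)
    have hb' : ¬ Blue φ n m (TableT φ n m a) p := fun h => h.1 (tableT_out hin)
    unfold step
    rw [if_neg hb, if_neg hb', table_out hin, tableT_out hin]

end CA
open CA in
/-- The cellular automaton `A_φ : Config_{n,m} → Config_{n,m}` is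
injective if and only if the CNF formula `φ` is not satisfiable. -/
theorem stmt_0 (n m : ℕ) (hn : 1 ≤ n) (hnodd : Odd n) (hm : 1 ≤ m) (φ : CNF) :
    (∀ C C' : Cfg, IsConfig n m C → IsConfig n m C' →
      step φ n m C = step φ n m C' → C = C') ↔ ¬ Satisfiable φ n m := by
  have hno : (n:ℤ) % 2 = 1 := by
    obtain ⟨k, hk⟩ := hnodd
    subst hk
    push_cast
    omega
  have hm1 : 1 ≤ (m:ℤ) := by exact_mod_cast hm
  have hn1 : 1 ≤ (n:ℤ) := by exact_mod_cast hn
  constructor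
  · intro hinj hsat
    obtain ⟨a, ha⟩ := hsat
    have h := hinj (Table φ n m a) (TableT φ n m a) table_isConfig tableT_isConfig
      (step_table_eq hno hm1 hn1 ha)
    have hin0 : inside n m ((0:ℤ), (0:ℤ)) := ⟨by omega, by omega, by omega, by omega⟩
    have h00 := congrArg CellState.label (congrFun h ((0:ℤ), (0:ℤ)))
    rw [table_label hin0, tableT_label hin0] at h00
    simp at h00
  · intro hunsat C C' hC hC' hstep
    exact eq_of_step_eq_of_not_sat hn hnodd hm hunsat hC hC' hstep
end

section
/- Let a = (a₁,…,a_m) ∈ {0,1}^m and let C ∈ Config_{n,m}. If C is locally correct and, for every j ∈ {1,…,m}, every cell of C whose state s satisfies coord(s) = (0,j) also satisfies a(s) = a_j, then C ∼ Table_φ(a). -/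
/-!
Rule (A) forces the corner cell to carry the index `(0,0)`: its left and upper neighbours lie
outside the rectangle, hence are quiescent and carry no index. From the corner, (A) propagates
the indices rightwards and downwards, so every cell carries its own position. Once the positions
are known, the state classes (S1)–(S7) decide which components are `□`, (C1) carries the
assignment of row `0` down every column, (B) reads off the formula, and the recurrences
(D2)/(D1) along each row and (C3)/(C2) down the last column compute, by induction, exactly the
partial disjunctions and partial conjunctions written in `Table φ n m a`.
-/

lemma Option.eq_some_of_ne_none_of_iff {o : Option Bool} {b : Bool} (ho : o ≠ none)
    (h : o = some true ↔ b = true) : o = some b := by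
  rcases o with _ | _ | _ <;> cases b <;> simp_all

namespace CA

variable {n m : ℕ} {φ : CNF} {a : ℤ → Bool} {C : Cfg}

@[simp] lemma leftN_mk_add_one (i j : ℤ) : leftN (i, j + 1) = (i, j) := by simp [leftN]

@[simp] lemma aboveN_mk_add_one (i j : ℤ) : aboveN (i + 1, j) = (i, j) := by simp [aboveN]

lemma inside_zero_zero : inside n m (0, 0) := ⟨le_rfl, by positivity, le_rfl, by positivity⟩

section Values

variable {i j : ℤ}

lemma pdVal_eq_true_iff : pdVal φ a i j = true ↔ ∃ u : ℤ, 1 ≤ u ∧ u ≤ j ∧ litSat φ a i u :=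
  @decide_eq_true_iff _ (Classical.propDecidable _)

lemma pdVal_eq_true_iff_clauseSat : pdVal φ a i m = true ↔ clauseSat φ a m i :=
  pdVal_eq_true_iff

lemma pdVal_one : pdVal φ a i 1 = true ↔ litSat φ a i 1 := by
  rw [pdVal_eq_true_iff]
  exact ⟨fun ⟨u, h1, h2, h⟩ => le_antisymm h2 h1 ▸ h, fun h => ⟨1, le_rfl, le_rfl, h⟩⟩

lemma pdVal_add_one (hj : 0 ≤ j) :
    pdVal φ a i (j + 1) = true ↔ pdVal φ a i j = true ∨ litSat φ a i (j + 1) := by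
  simp only [pdVal_eq_true_iff]
  constructor
  · rintro ⟨u, h1, h2, h⟩
    rcases (show u ≤ j ∨ u = j + 1 by omega) with hu | rfl
    exacts [Or.inl ⟨u, h1, hu, h⟩, Or.inr h]
  · rintro (⟨u, h1, h2, h⟩ | h)
    exacts [⟨u, h1, by omega, h⟩, ⟨j + 1, by omega, le_rfl, h⟩]

lemma pcVal_eq_true_iff : pcVal φ a m i = true ↔ ∀ v : ℤ, 1 ≤ v → v ≤ i → clauseSat φ a m v :=
  @decide_eq_true_iff _ (Classical.propDecidable _)

lemma pcVal_one : pcVal φ a m 1 = true ↔ clauseSat φ a m 1 := by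
  rw [pcVal_eq_true_iff]
  exact ⟨fun h => h 1 le_rfl le_rfl, fun h v h1 h2 => le_antisymm h2 h1 ▸ h⟩

lemma pcVal_add_one (hi : 0 ≤ i) :
    pcVal φ a m (i + 1) = true ↔ pcVal φ a m i = true ∧ clauseSat φ a m (i + 1) := by
  simp only [pcVal_eq_true_iff]
  refine ⟨fun h => ⟨fun v h1 h2 => h v h1 (by omega), h _ (by omega) le_rfl⟩, ?_⟩
  rintro ⟨h, hlast⟩ v h1 h2
  rcases (show v ≤ i ∨ v = i + 1 by omega) with hv | rfl
  exacts [h v h1 hv, hlast]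

end Values

section ValidState

variable {s : CellState} {i j : ℤ}

lemma ValidState.exists_coord (hs : ValidState n m s) (hq : s ≠ qState) :
    ∃ i j : ℤ, 0 ≤ i ∧ i ≤ n ∧ 0 ≤ j ∧ j ≤ m + 1 ∧ s.coord = (some i, some j) := by
  rcases hs with ⟨_, rfl⟩ | ⟨_, _, _, _, rfl⟩ | ⟨_, _, _, _, _, rfl⟩ | ⟨_, rfl⟩ |
    ⟨_, _, _, _, _, rfl⟩ | ⟨_, _, _, _, _, _, _, _, _, _, _, rfl⟩ | rfl
  all_goals first
    | exact absurd rfl hq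
    | exact ⟨_, _, by omega, by omega, by omega, by omega, rfl⟩

lemma ValidState.eq_none_iff (hs : ValidState n m s) (hco : s.coord = (some i, some j)) :
    (s.flag = none ↔ ¬(1 ≤ i ∧ 1 ≤ j ∧ j ≤ m)) ∧ (s.aval = none ↔ ¬(1 ≤ j ∧ j ≤ m)) ∧
    (s.pd = none ↔ ¬(1 ≤ i ∧ 1 ≤ j ∧ j ≤ m)) ∧ (s.pc = none ↔ ¬(1 ≤ i ∧ j = m + 1)) := by
  rcases hs with ⟨_, rfl⟩ | ⟨_, _, _, _, rfl⟩ | ⟨_, _, _, _, _, rfl⟩ | ⟨_, rfl⟩ |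
    ⟨_, _, _, _, _, rfl⟩ | ⟨_, _, _, _, _, _, _, _, _, _, _, rfl⟩ | rfl <;>
  simp only [qState, Prod.mk.injEq, Option.some.injEq, reduceCtorEq, and_false] at hco <;>
  obtain ⟨rfl, rfl⟩ := hco <;>
  simp only [reduceCtorEq, true_iff, false_iff, and_true] <;>
  refine ⟨?_, ?_, ?_, ?_⟩ <;> omega

end ValidState

def CoordsCorrect (n m : ℕ) (C : Cfg) : Prop :=
  ∀ p, inside n m p → (C p).coord = (some p.1, some p.2)

section Coordinates

variable {p : ℤ × ℤ}

lemma IsConfig.coord_zero_zero (hC : IsConfig n m C) (hA : ruleA n m C (0, 0)) :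
    (C (0, 0)).coord = (some 0, some 0) := by
  obtain ⟨i, j, hi0, hin, hj0, hjm, hco⟩ :=
    (hC.1 _).exists_coord (hC.2.1 _ inside_zero_zero)
  obtain ⟨-, ⟨hleft, -⟩, -, ⟨habove, -⟩⟩ := (hA i j hi0 hin hj0 hjm).mp hco
  have no_coord : ∀ q, ¬ inside n m q → ∀ x y : ℤ, (C q).coord ≠ (some x, some y) :=
    fun q hq x y h => by simp [hC.2.2 q hq, qState] at h
  obtain rfl : j = 0 := by
    by_contra hj
    exact no_coord _ (by simp [inside, leftN]) _ _ (hleft ⟨hi0, hin, by omega, by omega⟩)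
  obtain rfl : i = 0 := by
    by_contra hi
    exact no_coord _ (by simp [inside, aboveN]) _ _ (habove ⟨by omega, by omega, le_rfl, hjm⟩)
  exact hco

lemma coord_rightN (hp : inside n m p) (hA : ruleA n m C p)
    (hco : (C p).coord = (some p.1, some p.2)) (h : p.2 ≤ m) :
    (C (rightN p)).coord = (some p.1, some (p.2 + 1)) := by
  obtain ⟨h1, h2, h3, h4⟩ := hp
  exact ((hA p.1 p.2 h1 h2 h3 h4).mp hco).1.1 ⟨h1, h2, by omega, by omega⟩

lemma coord_belowN (hp : inside n m p) (hA : ruleA n m C p)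
    (hco : (C p).coord = (some p.1, some p.2)) (h : p.1 < n) :
    (C (belowN p)).coord = (some (p.1 + 1), some p.2) := by
  obtain ⟨h1, h2, h3, h4⟩ := hp
  exact ((hA p.1 p.2 h1 h2 h3 h4).mp hco).2.2.1.1 ⟨by omega, by omega, h3, h4⟩

theorem IsConfig.coordsCorrect (hC : IsConfig n m C)
    (hA : ∀ p, inside n m p → ruleA n m C p) : CoordsCorrect n m C := by
  have row_zero : ∀ j : ℤ, 0 ≤ j → j ≤ m + 1 → (C (0, j)).coord = (some 0, some j) := by
    intro j hj0 hjm
    induction j, hj0 using Int.leInduction with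
    | base => exact hC.coord_zero_zero (hA _ inside_zero_zero)
    | succ j hj ih =>
      have hp : inside n m (0, j) := ⟨le_rfl, by positivity, hj, by omega⟩
      exact coord_rightN hp (hA _ hp) (ih (by omega)) (by simp only; omega)
  rintro ⟨i, j⟩ ⟨hi0, hin, hj0, hjm⟩
  induction i, hi0 using Int.leInduction with
  | base => exact row_zero j hj0 hjm
  | succ i hi ih =>
    have hp : inside n m (i, j) := ⟨hi, by omega, hj0, hjm⟩
    exact coord_belowN hp (hA _ hp) (ih (by omega) hj0 hjm) (by simp only; omega)

end Coordinates

section Table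

variable {i j : ℤ}

lemma aval_eq (hcoord : CoordsCorrect n m C) (hC1 : ∀ p, inside n m p → ruleC1 n m C p)
    (hrow : ∀ (p : ℤ × ℤ) (j : ℤ), 1 ≤ j → j ≤ (m : ℤ) →
      (C p).coord = (some 0, some j) → (C p).aval = some (a j))
    (hi0 : 0 ≤ i) (hin : i ≤ n) (hj1 : 1 ≤ j) (hjm : j ≤ m) :
    (C (i, j)).aval = some (a j) := by
  induction i, hi0 using Int.leInduction with
  | base => exact hrow _ j hj1 hjm (hcoord _ ⟨le_rfl, by positivity, by omega, by omega⟩)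
  | succ i hi ih =>
    have hp : inside n m (i + 1, j) := ⟨by omega, hin, by omega, by omega⟩
    have hup := ((hC1 _ hp) _ _ (hcoord _ hp) hj1 hjm).1
    rw [aboveN_mk_add_one] at hup
    rw [← hup ⟨hi, by omega, by omega, by omega⟩, ih (by omega)]

lemma flag_eq (hcoord : CoordsCorrect n m C) (hB : ∀ p, inside n m p → ruleB φ n m C p)
    (hp : inside n m (i, j)) (hi1 : 1 ≤ i) (hj1 : 1 ≤ j) (hjm : j ≤ m) :
    (C (i, j)).flag = some (flagInt (φ i j)) := by
  obtain ⟨hpos, hneg, hzero⟩ := hB _ hp i j (hcoord _ hp) hi1 hp.2.1 hj1 hjm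
  rcases h : φ i j with _ | _ | _
  exacts [hzero.2 h, hneg.2 h, hpos.2 h]

lemma litHolds_iff_litSat {p : ℤ × ℤ} (hflag : (C p).flag = some (flagInt (φ p.1 p.2)))
    (haval : (C p).aval = some (a p.2)) : litHolds C p ↔ litSat φ a p.1 p.2 := by
  rw [litHolds, litSat, hflag, haval]
  rcases φ p.1 p.2 with _ | _ | _ <;> cases a p.2 <;> simp [flagInt]

lemma pd_eq (hC : IsConfig n m C) (hcoord : CoordsCorrect n m C)
    (hloc : ∀ p, inside n m p → LocallyCorrect φ n m C p)
    (hrow : ∀ (p : ℤ × ℤ) (j : ℤ), 1 ≤ j → j ≤ (m : ℤ) →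
      (C p).coord = (some 0, some j) → (C p).aval = some (a j))
    (hi1 : 1 ≤ i) (hin : i ≤ n) (hj1 : 1 ≤ j) (hjm : j ≤ m) :
    (C (i, j)).pd = some (pdVal φ a i j) := by
  have hp : ∀ {j : ℤ}, 1 ≤ j → j ≤ m → inside n m (i, j) :=
    fun hj1 hjm => ⟨by omega, hin, by omega, by omega⟩
  have hlit : ∀ {j : ℤ}, 1 ≤ j → j ≤ m → (litHolds C (i, j) ↔ litSat φ a i j) :=
    fun hj1 hjm => litHolds_iff_litSat
      (flag_eq hcoord (fun p hp => (hloc p hp).2.1) (hp hj1 hjm) hi1 hj1 hjm)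
      (aval_eq hcoord (fun p hp => (hloc p hp).2.2.1) hrow (by omega) hin hj1 hjm)
  have hsome : ∀ {j : ℤ}, 1 ≤ j → j ≤ m → (C (i, j)).pd ≠ none :=
    fun hj1 hjm h => ((hC.1 _).eq_none_iff (hcoord _ (hp hj1 hjm))).2.2.1.mp h ⟨hi1, hj1, hjm⟩
  induction j, hj1 using Int.leInduction with
  | base =>
    obtain ⟨-, -, -, -, -, -, hD2, -⟩ := hloc _ (hp le_rfl hjm)
    refine Option.eq_some_of_ne_none_of_iff (hsome le_rfl hjm) ?_
    rw [hD2 i (hcoord _ (hp le_rfl hjm)) hi1 hin, hlit le_rfl hjm, pdVal_one]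
  | succ j hj ih =>
    obtain ⟨-, -, -, -, -, hD1, -, -⟩ := hloc _ (hp (by omega) hjm)
    refine Option.eq_some_of_ne_none_of_iff (hsome (by omega) hjm) ?_
    rw [hD1 i (j + 1) (hcoord _ (hp (by omega) hjm)) hi1 hin (by omega) hjm, leftN_mk_add_one,
      ih (by omega), Option.some_inj, hlit (by omega) hjm, pdVal_add_one (by omega)]

lemma pc_eq (hm : 1 ≤ m) (hC : IsConfig n m C) (hcoord : CoordsCorrect n m C)
    (hloc : ∀ p, inside n m p → LocallyCorrect φ n m C p)
    (hrow : ∀ (p : ℤ × ℤ) (j : ℤ), 1 ≤ j → j ≤ (m : ℤ) →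
      (C p).coord = (some 0, some j) → (C p).aval = some (a j))
    (hi1 : 1 ≤ i) (hin : i ≤ n) :
    (C (i, m + 1)).pc = some (pcVal φ a m i) := by
  have hp : ∀ {i : ℤ}, 1 ≤ i → i ≤ n → inside n m (i, m + 1) :=
    fun hi1 hin => ⟨by omega, hin, by omega, le_rfl⟩
  have hsome : ∀ {i : ℤ}, 1 ≤ i → i ≤ n → (C (i, m + 1)).pc ≠ none :=
    fun hi1 hin h => ((hC.1 _).eq_none_iff (hcoord _ (hp hi1 hin))).2.2.2.mp h ⟨hi1, rfl⟩
  have hpd : ∀ {i : ℤ}, 1 ≤ i → i ≤ n → (C (i, m)).pd = some (pdVal φ a i m) :=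
    fun hi1 hin => pd_eq hC hcoord hloc hrow hi1 hin (by exact_mod_cast hm) le_rfl
  induction i, hi1 using Int.leInduction with
  | base =>
    obtain ⟨-, -, -, -, hC3, -, -, -⟩ := hloc _ (hp le_rfl hin)
    refine Option.eq_some_of_ne_none_of_iff (hsome le_rfl hin) ?_
    rw [hC3 (hcoord _ (hp le_rfl hin)), leftN_mk_add_one, hpd le_rfl hin, Option.some_inj,
      pdVal_eq_true_iff_clauseSat, pcVal_one]
  | succ i hi ih =>
    obtain ⟨-, -, -, hC2, -, -, -, -⟩ := hloc _ (hp (by omega) hin)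
    refine Option.eq_some_of_ne_none_of_iff (hsome (by omega) hin) ?_
    rw [hC2 (i + 1) (hcoord _ (hp (by omega) hin)) (by omega), aboveN_mk_add_one,
      leftN_mk_add_one, ih (by omega), hpd (by omega) hin, Option.some_inj, Option.some_inj,
      pdVal_eq_true_iff_clauseSat, pcVal_add_one (by omega)]

end Table

end CA

open CA in
theorem stmt_3_general (n m : ℕ) (hm : 1 ≤ m) (φ : CNF)
    (a : ℤ → Bool) (C : Cfg) (hC : IsConfig n m C)
    (hloc : ∀ p : ℤ × ℤ, inside n m p → LocallyCorrect φ n m C p)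
    (hrow : ∀ (p : ℤ × ℤ) (j : ℤ), 1 ≤ j → j ≤ (m : ℤ) →
      (C p).coord = (some 0, some j) → (C p).aval = some (a j)) :
    Similar C (Table φ n m a) := by
  have hcoord := hC.coordsCorrect fun p hp => (hloc p hp).1
  rintro ⟨i, j⟩
  by_cases hp : inside n m (i, j)
  swap
  · simp [Table, hp, hC.2.2 _ hp]
  obtain ⟨hflag, haval, hpd, hpc⟩ := (hC.1 (i, j)).eq_none_iff (hcoord _ hp)
  simp only [Table, if_pos hp]
  obtain ⟨hi0, hin, hj0, hjm⟩ := id hp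
  refine ⟨hcoord _ hp, ?_, ?_, ?_, ?_⟩ <;> split_ifs with h
  · exact flag_eq hcoord (fun p hp => (hloc p hp).2.1) hp h.1 h.2.2.1 h.2.2.2
  · exact hflag.2 (by omega)
  · exact aval_eq hcoord (fun p hp => (hloc p hp).2.2.1) hrow hi0 hin h.1 h.2
  · exact haval.2 h
  · exact pd_eq hC hcoord hloc hrow h.1 h.2.1 h.2.2.1 h.2.2.2
  · exact hpd.2 (by omega)
  · obtain ⟨hi1, -, rfl⟩ := h
    exact pc_eq hm hC hcoord hloc hrow hi1 hin
  · exact hpc.2 (by omega)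

open CA in
/-- If `C ∈ Config_{n,m}` is locally correct and its `0`th row
carries the assignment `a`, then `C ∼ Table_φ(a)`. -/
theorem stmt_3 (n m : ℕ) (hn : 1 ≤ n) (hnodd : Odd n) (hm : 1 ≤ m) (φ : CNF)
    (a : ℤ → Bool) (C : Cfg) (hC : IsConfig n m C)
    (hloc : ∀ p : ℤ × ℤ, inside n m p → LocallyCorrect φ n m C p)
    (hrow : ∀ (p : ℤ × ℤ) (j : ℤ), 1 ≤ j → j ≤ (m : ℤ) →
      (C p).coord = (some 0, some j) → (C p).aval = some (a j)) :
    Similar C (Table φ n m a) :=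
  stmt_3_general n m hm φ a C hC hloc hrow
end

section
/- Let C, C′ ∈ Config_{n,m} with C ∼ C′, and let γ = (c₁,…,c_t) be a pointed chain in C (hence also in C′). For each k let s_k be the state of c_k in C and s_k′ its state in C′. If there exists an index k with label(s_k) ≠ label(s_k′), then there exists an index ℓ ∈ {1,…,t} such that the states A_φ(C)(c_ℓ) and A_φ(C′)(c_ℓ) have different labels. (In other words, A_φ is injective when restricted to pointed chains.) -/
/-!
Similar configurations have the same blue cells and the same successor positions, since
colours and successors ignore labels. At the red end of a pointed chain `A_φ` leaves the label
unchanged, and at a blue cell it replaces the label by its XOR with the successor's label.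
So if the images of `C` and `C'` agree along the chain, their labels agree at the red end, and
this agreement propagates backwards along the chain one cell at a time.
-/

namespace CA

theorem ValidState.coord_mem {n m : ℕ} {s : CellState} {i j : ℤ} (h : ValidState n m s)
    (hs : s.coord = (some i, some j)) :
    0 ≤ i ∧ i ≤ (n : ℤ) ∧ 0 ≤ j ∧ j ≤ (m : ℤ) + 1 := by
  rcases h with ⟨_, rfl⟩ | ⟨_, _, _, _, rfl⟩ | ⟨_, _, _, _, _, rfl⟩ | ⟨_, rfl⟩ |
    ⟨_, _, _, _, _, rfl⟩ | ⟨_, _, _, _, _, _, _, _, _, _, _, rfl⟩ | rfl <;>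
    simp only [qState, Prod.mk.injEq, Option.some.injEq, reduceCtorEq,
      false_and] at hs <;> omega

theorem ValidState.exists_label_eq_some {n m : ℕ} {s : CellState} (h : ValidState n m s)
    (hs : s ≠ qState) : ∃ l, s.label = some l := by
  rcases h with ⟨l, rfl⟩ | ⟨_, l, _, _, rfl⟩ | ⟨_, _, l, _, _, rfl⟩ | ⟨l, rfl⟩ |
    ⟨_, _, l, _, _, rfl⟩ | ⟨_, _, _, _, _, l, _, _, _, _, _, rfl⟩ | rfl
  all_goals first | exact ⟨l, rfl⟩ | exact absurd rfl hs

theorem ne_qState_of_coord_eq {s : CellState} {i j : ℤ} (hs : s.coord = (some i, some j)) :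
    s ≠ qState := by
  rintro rfl
  simp [qState] at hs

theorem IsSucc.ne_qState {n m : ℕ} {C : Cfg} {p q : ℤ × ℤ} (h : IsSucc n m C p q) :
    C q ≠ qState := by
  obtain ⟨_, _, _, _, hq⟩ := h
  exact ne_qState_of_coord_eq hq

theorem IsConfig.eq_qState_iff {n m : ℕ} {C : Cfg} (hC : IsConfig n m C) (p : ℤ × ℤ) :
    C p = qState ↔ ¬ inside n m p :=
  ⟨fun hq hp => hC.2.1 p hp hq, hC.2.2 p⟩

theorem nbrCoordOK.coord_eq {n m : ℕ} {C : Cfg} {q idx : ℤ × ℤ} (h : nbrCoordOK n m C q idx)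
    (hq : C q ≠ qState) : (C q).coord = (some idx.1, some idx.2) :=
  h.1 (not_not.mp (mt h.2 hq))

theorem coord_eq_of_vnNbr {n m : ℕ} {C : Cfg} {p q : ℤ × ℤ} {i j : ℤ}
    (hC : IsConfig n m C) (hA : ruleA n m C p) (hp : (C p).coord = (some i, some j))
    (hpq : vnNbr p q) (hq : C q ≠ qState) :
    (C q).coord = (some (i + (q.1 - p.1)), some (j + (q.2 - p.2))) := by
  obtain ⟨hi₀, hin, hj₀, hjm⟩ := (hC.1 p).coord_mem hp
  obtain ⟨hr, hl, hb, ha⟩ := (hA i j hi₀ hin hj₀ hjm).mp hp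
  rcases hpq with rfl | rfl | rfl | rfl
  · rw [hr.coord_eq hq]; simp [rightN]
  · rw [hl.coord_eq hq]; simp [leftN, sub_eq_add_neg]
  · rw [hb.coord_eq hq]; simp [belowN]
  · rw [ha.coord_eq hq]; simp [aboveN, sub_eq_add_neg]

theorem succPos_eq_of_isSucc {n m : ℕ} {C : Cfg} {p q : ℤ × ℤ} (hC : IsConfig n m C)
    (hA : ruleA n m C p) (hpq : IsSucc n m C p q) : succPos n m C p = q := by
  obtain ⟨hnbr, i, j, hp, hq⟩ := hpq
  have h := coord_eq_of_vnNbr hC hA hp hnbr (ne_qState_of_coord_eq hq)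
  rw [hq] at h
  simp only [Prod.mk.injEq, Option.some.injEq] at h
  unfold succPos
  rw [hp]
  ext <;> simp only <;> omega

theorem step_label_of_blue {φ : CNF} {n m : ℕ} {C : Cfg} {p : ℤ × ℤ} (h : Blue φ n m C p) :
    (step φ n m C p).label =
      Option.map₂ Bool.xor (C p).label (C (succPos n m C p)).label := by
  simp only [step, if_pos h]

theorem step_label_of_not_blue {φ : CNF} {n m : ℕ} {C : Cfg} {p : ℤ × ℤ}
    (h : ¬ Blue φ n m C p) : (step φ n m C p).label = (C p).label := by
  simp only [step, if_neg h]

section Similar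

variable {φ : CNF} {n m : ℕ} {C C' : Cfg}

theorem Similar.succPos_eq (hsim : Similar C C') (p : ℤ × ℤ) :
    succPos n m C p = succPos n m C' p := by
  simp only [succPos, (hsim p).1]

theorem Similar.blue_iff (hsim : Similar C C') (hC : IsConfig n m C) (hC' : IsConfig n m C')
    (p : ℤ × ℤ) : Blue φ n m C p ↔ Blue φ n m C' p := by
  have hq : ∀ p, C p = qState ↔ C' p = qState := fun p => by
    rw [hC.eq_qState_iff, hC'.eq_qState_iff]
  have hcoord p := (hsim p).1
  have hflag p := (hsim p).2.1
  have haval p := (hsim p).2.2.1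
  have hpd p := (hsim p).2.2.2.1
  have hpc p := (hsim p).2.2.2.2
  simp only [Blue, LocallyCorrect, ruleA, ruleB, ruleC1, ruleC2, ruleC3, ruleD1, ruleD2, ruleE,
    nbrCoordOK, litHolds, ne_eq, hcoord, hflag, haval, hpd, hpc, hq]

theorem Similar.label_eq_of_not_blue (hsim : Similar C C') (hC : IsConfig n m C)
    (hC' : IsConfig n m C') {p : ℤ × ℤ} (hp : ¬ Blue φ n m C p)
    (hstep : (step φ n m C p).label = (step φ n m C' p).label) :
    (C p).label = (C' p).label := by
  rwa [step_label_of_not_blue hp,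
    step_label_of_not_blue (mt (hsim.blue_iff hC hC' p).mpr hp)] at hstep

/-- Labels of non-quiescent cells are never `□`, so the successor's label can be cancelled
from `label(p) XOR label(q)`. -/
theorem Similar.label_eq_of_blue_of_isSucc (hsim : Similar C C') (hC : IsConfig n m C)
    (hC' : IsConfig n m C') {p q : ℤ × ℤ} (hp : Blue φ n m C p) (hpq : IsSucc n m C p q)
    (hq : (C q).label = (C' q).label)
    (hstep : (step φ n m C p).label = (step φ n m C' p).label) :
    (C p).label = (C' p).label := by
  obtain ⟨b, hb⟩ := (hC.1 q).exists_label_eq_some hpq.ne_qState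
  rw [step_label_of_blue hp, step_label_of_blue ((hsim.blue_iff hC hC' p).mp hp),
    ← hsim.succPos_eq, succPos_eq_of_isSucc hC hp.2.1.1 hpq, ← hq, hb,
    Option.map₂_coe_right, Option.map₂_coe_right] at hstep
  exact Option.map_injective (fun _ _ => Bool.xor_left_inj.mp) hstep

theorem Similar.label_eq_of_pointedChain (hsim : Similar C C') (hC : IsConfig n m C)
    (hC' : IsConfig n m C') {t : ℕ} {c : ℕ → ℤ × ℤ}
    (hblue : ∀ k : ℕ, k < t - 1 → Blue φ n m C (c k))
    (hred : ¬ Blue φ n m C (c (t - 1)))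
    (hchain : ∀ k : ℕ, k + 1 < t → IsSucc n m C (c k) (c (k + 1)))
    (hstep : ∀ l : ℕ, l < t → (step φ n m C (c l)).label = (step φ n m C' (c l)).label)
    {k : ℕ} (hk : k < t) : (C (c k)).label = (C' (c k)).label := by
  induction (Nat.le_sub_one_of_lt hk) using Nat.decreasingInduction with
  | self => exact hsim.label_eq_of_not_blue hC hC' hred (hstep _ (by omega))
  | of_succ j hj ih =>
    exact hsim.label_eq_of_blue_of_isSucc hC hC' (hblue j hj) (hchain j (by omega))
      (ih (by omega)) (hstep j (by omega))

end Similar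

end CA

open CA in
theorem stmt_7_general (n m : ℕ) (φ : CNF)
    (C C' : Cfg) (hC : IsConfig n m C) (hC' : IsConfig n m C')
    (hsim : Similar C C') (t : ℕ) (c : ℕ → ℤ × ℤ)
    (hblue : ∀ k : ℕ, k < t - 1 → Blue φ n m C (c k))
    (hred : ¬ Blue φ n m C (c (t - 1)))
    (hchain : ∀ k : ℕ, k + 1 < t → IsSucc n m C (c k) (c (k + 1)))
    (hdiff : ∃ k : ℕ, k < t ∧ (C (c k)).label ≠ (C' (c k)).label) :
    ∃ l : ℕ, l < t ∧ (step φ n m C (c l)).label ≠ (step φ n m C' (c l)).label := by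
  obtain ⟨k, hk, hne⟩ := hdiff
  by_contra! hstep
  exact hne (hsim.label_eq_of_pointedChain hC hC' hblue hred hchain hstep hk)

open CA in
/-- `A_φ` is injective on pointed chains: if `C ∼ C'` and the
labels along a pointed chain `(c 0, …, c (t−1))` of `C` differ somewhere between
`C` and `C'`, then the labels of the images differ at some cell of the chain. -/
theorem stmt_7 (n m : ℕ) (hn : 1 ≤ n) (hnodd : Odd n) (hm : 1 ≤ m) (φ : CNF)
    (C C' : Cfg) (hC : IsConfig n m C) (hC' : IsConfig n m C')
    (hsim : Similar C C') (t : ℕ) (ht : 1 ≤ t) (c : ℕ → ℤ × ℤ)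
    (hblue : ∀ k : ℕ, k < t - 1 → Blue φ n m C (c k))
    (hred : ¬ Blue φ n m C (c (t - 1)))
    (hchain : ∀ k : ℕ, k + 1 < t → IsSucc n m C (c k) (c (k + 1)))
    (hdiff : ∃ k : ℕ, k < t ∧ (C (c k)).label ≠ (C' (c k)).label) :
    ∃ l : ℕ, l < t ∧ (step φ n m C (c l)).label ≠ (step φ n m C' (c l)).label :=
  stmt_7_general n m φ C C' hC hC' hsim t c hblue hred hchain hdiff
end
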